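/- arXiv:2407.13440 — 2 statements merged into one kernel-verified Lean document; each statement's English description precedes it below -/
import Mathlib

section
/- Let X be a second-countable locally compact Hausdorff space and let κ be a kernel on X satisfying (R1), (R2), (R3). Let A ⊂ X, A ≠ X, with cp_*A > 0, and let ω be a nonzero positive Radon measure with either I(ω) < ∞, or ω concentrated on X∖A and ω(X) < ∞. Define Γ_{A,ω} := { ν ∈ E⁺ : U^ν ≥ U^ω nearly everywhere on A }. Then the inner balayage ω^A belongs to Γ_{A,ω} and is the unique measure in Γ_{A,ω} satisfying U^{ω^A}(x) = min over ν ∈ Γ_{A,ω} of U^ν(x) for every x ∈ X. -/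
open MeasureTheory Filter Set Topology ENNReal CompactlySupported UniformConvergence

namespace Balayage
open scoped Classical

variable {X : Type*} [TopologicalSpace X] [MeasurableSpace X]

/-- A kernel: symmetric, lower semicontinuous, `[0,∞]`-valued. -/
structure IsKernel (κ : X → X → ℝ≥0∞) : Prop where
  symm : ∀ x y, κ x y = κ y x
  lsc : LowerSemicontinuous fun p : X × X => κ p.1 p.2

/-- The potential `U^μ(x) = ∫ κ(x,y) dμ(y)`. -/
noncomputable def potential (κ : X → X → ℝ≥0∞) (μ : Measure X) (x : X) : ℝ≥0∞ :=
  ∫⁻ y, κ x y ∂μ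

/-- The mutual energy `I(μ,ν) = ∫∫ κ(x,y) dν(y) dμ(x)` of two positive measures. -/
noncomputable def energy (κ : X → X → ℝ≥0∞) (μ ν : Measure X) : ℝ≥0∞ :=
  ∫⁻ x, potential κ ν x ∂μ

/-- A positive Radon measure (regular Borel measure, finite on compacts). -/
def IsRadon (μ : Measure X) : Prop := μ.Regular

/-- Finite energy: `I(μ) < ∞`. -/
def FiniteEnergy (κ : X → X → ℝ≥0∞) (μ : Measure X) : Prop := energy κ μ μ < ⊤

/-- Membership in the cone `E⁺` of positive Radon measures of finite energy. -/
def memE (κ : X → X → ℝ≥0∞) (μ : Measure X) : Prop := IsRadon μ ∧ FiniteEnergy κ μ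

/-- Membership in `E⁺(A)`: measures of `E⁺` concentrated on `A`
(i.e. the complement of `A` is negligible). -/
def memEOn (κ : X → X → ℝ≥0∞) (A : Set X) (μ : Measure X) : Prop :=
  memE κ μ ∧ μ Aᶜ = 0

/-- The strong (energy) distance `‖μ-ν‖ = √(I(μ)+I(ν)-2I(μ,ν))`. -/
noncomputable def sDist (κ : X → X → ℝ≥0∞) (μ ν : Measure X) : ℝ :=
  Real.sqrt ((energy κ μ μ).toReal + (energy κ ν ν).toReal - 2 * (energy κ μ ν).toReal)

/-- Membership in `E'(A)`, the strong closure of `E⁺(A)` in `E⁺`. -/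
def memEClos (κ : X → X → ℝ≥0∞) (A : Set X) (μ : Measure X) : Prop :=
  memE κ μ ∧ ∀ ε : ℝ, 0 < ε → ∃ ν, memEOn κ A ν ∧ sDist κ μ ν < ε

/-- The capacity of a compact set: the inverse of the minimal energy of
probability measures concentrated on it. -/
noncomputable def capC (κ : X → X → ℝ≥0∞) (K : Set X) : ℝ≥0∞ :=
  (⨅ (μ : Measure X) (_ : IsProbabilityMeasure μ) (_ : μ Kᶜ = 0), energy κ μ μ)⁻¹

/-- The inner capacity `cp_* A`: supremum of capacities of compact subsets. -/
noncomputable def innerCap (κ : X → X → ℝ≥0∞) (A : Set X) : ℝ≥0∞ :=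
  ⨆ (K : Set X) (_ : IsCompact K) (_ : K ⊆ A), capC κ K

/-- The outer capacity `cp^* A`: infimum of inner capacities of open supersets. -/
noncomputable def outerCap (κ : X → X → ℝ≥0∞) (A : Set X) : ℝ≥0∞ :=
  ⨅ (D : Set X) (_ : IsOpen D) (_ : A ⊆ D), innerCap κ D

/-- Strict positive definiteness (energy principle), stated for pairs of positive
measures of finite energy: `I(μ-ν) ≥ 0`, with equality only for `μ = ν`. -/
def StrictlyPosDef (κ : X → X → ℝ≥0∞) : Prop :=
  ∀ μ ν : Measure X, IsRadon μ → IsRadon ν → FiniteEnergy κ μ → FiniteEnergy κ ν →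
    (2 * energy κ μ ν ≤ energy κ μ μ + energy κ ν ν) ∧
    (2 * energy κ μ ν = energy κ μ μ + energy κ ν ν → μ = ν)

/-- Vague convergence of a sequence of measures: convergence of integrals of
continuous compactly supported functions. -/
def VagueTendsto (μ : ℕ → Measure X) (μ₀ : Measure X) : Prop :=
  ∀ f : X → ℝ, Continuous f → HasCompactSupport f →
    Tendsto (fun j => ∫ x, f x ∂(μ j)) atTop (nhds (∫ x, f x ∂μ₀))

/-- A perfect kernel: strictly positive definite, `E⁺` strongly complete, and the strong
topology on `E⁺` finer than the vague topology (sequential formulation; sequences suffice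
on second-countable spaces). -/
structure Perfect (κ : X → X → ℝ≥0∞) : Prop where
  posdef : StrictlyPosDef κ
  complete : ∀ μ : ℕ → Measure X, (∀ j, memE κ (μ j)) →
    (∀ ε : ℝ, 0 < ε → ∃ N, ∀ m ≥ N, ∀ n ≥ N, sDist κ (μ m) (μ n) < ε) →
    ∃ μ₀, memE κ μ₀ ∧ Tendsto (fun j => sDist κ (μ j) μ₀) atTop (nhds 0)
  finerThanVague : ∀ (μ : ℕ → Measure X) (μ₀ : Measure X), (∀ j, memE κ (μ j)) →
    memE κ μ₀ → Tendsto (fun j => sDist κ (μ j) μ₀) atTop (nhds 0) → VagueTendsto μ μ₀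

/-- The domination principle. -/
def Domination (κ : X → X → ℝ≥0∞) : Prop :=
  ∀ μ ν : Measure X, memE κ μ → IsRadon ν →
    (∀ᵐ x ∂μ, potential κ μ x ≤ potential κ ν x) → ∀ x, potential κ μ x ≤ potential κ ν x

/-- `h`-Ugaheri's maximum principle; for `h = 1` this is Frostman's maximum principle. -/
def Ugaheri (κ : X → X → ℝ≥0∞) (h : ℝ) : Prop :=
  ∀ μ : Measure X, memE κ μ → ∀ c : ℝ, 0 < c →
    (∀ᵐ x ∂μ, potential κ μ x ≤ ENNReal.ofReal c) →
    ∀ x, potential κ μ x ≤ ENNReal.ofReal (h * c)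

/-- Condition (R1): the kernel is perfect and satisfies the domination and
`h`-Ugaheri maximum principles for some `h ∈ [1, ∞)`. -/
structure R1 (κ : X → X → ℝ≥0∞) : Prop where
  perfect : Perfect κ
  domination : Domination κ
  ugaheri : ∃ h : ℝ, 1 ≤ h ∧ Ugaheri κ h

/-- Condition (R2): `κ(x,y)` is continuous and finite off the diagonal. -/
def R2 (κ : X → X → ℝ≥0∞) : Prop :=
  ContinuousOn (fun p : X × X => κ p.1 p.2) {p : X × X | p.1 ≠ p.2} ∧
    ∀ x y : X, x ≠ y → κ x y ≠ ⊤

/-- Condition (R3): `κ(·,y) → 0` uniformly on compact sets as `y` tends to the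
Alexandroff point of `X`. -/
def R3 (κ : X → X → ℝ≥0∞) : Prop :=
  ∀ K : Set X, IsCompact K → ∀ ε : ℝ≥0∞, 0 < ε →
    ∃ K' : Set X, IsCompact K' ∧ ∀ y ∉ K', ∀ x ∈ K, κ x y < ε

/-- `μA` is the inner balayage of `ω` onto `A`: it belongs to `E'(A)` and its potential
coincides with that of `ω` nearly everywhere on `A` (up to a set of inner capacity zero). -/
def IsInnerBalayage (κ : X → X → ℝ≥0∞) (A : Set X) (ω μA : Measure X) : Prop :=
  memEClos κ A μA ∧ innerCap κ {x ∈ A | potential κ μA x ≠ potential κ ω x} = 0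

/-- `μA` is the outer balayage of `ω` onto `A`: it belongs to `E'(A)` and its potential
coincides with that of `ω` quasi-everywhere on `A` (up to a set of outer capacity zero). -/
def IsOuterBalayage (κ : X → X → ℝ≥0∞) (A : Set X) (ω μA : Measure X) : Prop :=
  memEClos κ A μA ∧ outerCap κ {x ∈ A | potential κ μA x ≠ potential κ ω x} = 0

/-- Membership in the class `Γ_{A,ω}` of positive finite-energy Radon measures whose
potential dominates that of `ω` nearly everywhere on `A`. -/
def memGamma (κ : X → X → ℝ≥0∞) (A : Set X) (ω ν : Measure X) : Prop :=
  memE κ ν ∧ innerCap κ {x ∈ A | ¬ potential κ ω x ≤ potential κ ν x} = 0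


/-! ### Auxiliary lemmas -/

section Aux
set_option linter.unusedSectionVars false

variable {X : Type*} [TopologicalSpace X] [MeasurableSpace X]

lemma innerCap_mono {κ : X → X → ℝ≥0∞} {S T : Set X} (h : S ⊆ T) :
    innerCap κ S ≤ innerCap κ T := by
  refine iSup_le fun K => iSup_le fun hK => iSup_le fun hKS => ?_
  exact le_iSup_of_le K (le_iSup_of_le hK (le_iSup_of_le (hKS.trans h) le_rfl))

lemma capC_le_innerCap {κ : X → X → ℝ≥0∞} {S K : Set X} (hK : IsCompact K) (hKS : K ⊆ S) :
    capC κ K ≤ innerCap κ S :=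
  le_iSup_of_le K (le_iSup_of_le hK (le_iSup_of_le hKS le_rfl))

lemma energy_eq_top_of_capC_eq_zero {κ : X → X → ℝ≥0∞} {K : Set X}
    (h : capC κ K = 0) {lam : Measure X} (hp : IsProbabilityMeasure lam) (hl : lam Kᶜ = 0) :
    energy κ lam lam = ⊤ := by
  rw [capC, ENNReal.inv_eq_zero] at h
  exact top_le_iff.mp
    (h ▸ iInf_le_of_le lam (iInf_le_of_le hp (iInf_le_of_le hl le_rfl)))

lemma innerCap_eq_zero_iff {κ : X → X → ℝ≥0∞} {S : Set X} :
    innerCap κ S = 0 ↔ ∀ K, IsCompact K → K ⊆ S → capC κ K = 0 := by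
  simp only [innerCap, ENNReal.iSup_eq_zero]

variable [T2Space X] [LocallyCompactSpace X] [SecondCountableTopology X] [BorelSpace X]
variable {κ : X → X → ℝ≥0∞}

lemma IsKernel.measurable_uncurry (hκ : IsKernel κ) :
    Measurable fun p : X × X => κ p.1 p.2 := hκ.lsc.measurable

lemma measurable_potential (hκ : IsKernel κ) (μ : Measure X) [SFinite μ] :
    Measurable (potential κ μ) :=
  Measurable.lintegral_prod_right hκ.measurable_uncurry

lemma IsRadon.sigmaFinite {μ : Measure X} (hμ : IsRadon μ) : SigmaFinite μ := by
  haveI : μ.Regular := hμ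
  infer_instance

lemma IsRadon.finiteOnCompacts {μ : Measure X} (hμ : IsRadon μ) :
    IsFiniteMeasureOnCompacts μ := by
  haveI : μ.Regular := hμ
  infer_instance

lemma isRadon_of_finiteOnCompacts (μ : Measure X) [IsFiniteMeasureOnCompacts μ] :
    IsRadon μ := by
  show μ.Regular
  infer_instance

lemma potential_mono {μ ν : Measure X} (h : μ ≤ ν) (x : X) :
    potential κ μ x ≤ potential κ ν x :=
  lintegral_mono' h le_rfl

lemma energy_mono {μ μ' ν ν' : Measure X} (h : μ ≤ μ') (h' : ν ≤ ν') :
    energy κ μ ν ≤ energy κ μ' ν' :=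
  lintegral_mono' h fun x => potential_mono h' x

lemma energy_symm (hκ : IsKernel κ) (μ ν : Measure X) [SFinite μ] [SFinite ν] :
    energy κ μ ν = energy κ ν μ := by
  have h1 : energy κ μ ν = ∫⁻ x, ∫⁻ y, κ x y ∂ν ∂μ := rfl
  rw [h1, lintegral_lintegral_swap hκ.measurable_uncurry.aemeasurable]
  refine lintegral_congr fun y => lintegral_congr fun x => (hκ.symm y x).symm

lemma energy_add_left (μ ν ρ : Measure X) :
    energy κ (μ + ν) ρ = energy κ μ ρ + energy κ ν ρ :=
  lintegral_add_measure _ _ _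

lemma potential_add (μ ν : Measure X) (x : X) :
    potential κ (μ + ν) x = potential κ μ x + potential κ ν x :=
  lintegral_add_measure _ _ _

lemma energy_add_right (hκ : IsKernel κ) (ρ μ ν : Measure X) [SFinite μ] [SFinite ν] :
    energy κ ρ (μ + ν) = energy κ ρ μ + energy κ ρ ν := by
  have : ∀ x, potential κ (μ + ν) x = potential κ μ x + potential κ ν x := potential_add μ ν
  simp only [energy, this]
  exact lintegral_add_left (measurable_potential hκ μ) _

lemma energy_smul_left (c : ℝ≥0∞) (μ ν : Measure X) :
    energy κ (c • μ) ν = c * energy κ μ ν :=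
  lintegral_smul_measure _ _

lemma potential_smul (c : ℝ≥0∞) (μ : Measure X) (x : X) :
    potential κ (c • μ) x = c * potential κ μ x :=
  lintegral_smul_measure _ _

lemma energy_smul_right (hκ : IsKernel κ) (c : ℝ≥0∞) (ρ μ : Measure X) [SFinite μ] :
    energy κ ρ (c • μ) = c * energy κ ρ μ := by
  simp only [energy, potential_smul]
  exact lintegral_const_mul c (measurable_potential hκ μ)

lemma energy_cross_ne_top (hpd : StrictlyPosDef κ) {μ ν : Measure X}
    (hμ : memE κ μ) (hν : memE κ ν) : energy κ μ ν ≠ ⊤ := by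
  have h := (hpd μ ν hμ.1 hν.1 hμ.2 hν.2).1
  intro hc
  rw [hc, ENNReal.mul_top (by norm_num)] at h
  exact (ENNReal.add_lt_top.mpr ⟨hμ.2, hν.2⟩).ne (top_le_iff.mp h)


/-- Pure real Cauchy–Schwarz auxiliary. -/
lemma cs_aux {a b cr : ℝ} (ha0 : 0 ≤ a) (hb0 : 0 ≤ b)
    (H : ∀ t : ℝ, 0 ≤ t → 0 ≤ a - 2 * t * cr + t ^ 2 * b ∧ 0 ≤ a + 2 * t * cr + t ^ 2 * b) :
    |cr| ≤ Real.sqrt a * Real.sqrt b := by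
  have key : ∀ t : ℝ, 0 ≤ t → 2 * t * |cr| ≤ a + t ^ 2 * b := by
    intro t ht
    obtain ⟨h1, h2⟩ := H t ht
    rcases abs_cases cr with ⟨he, _⟩ | ⟨he, _⟩ <;> rw [he] <;> linarith
  rcases eq_or_lt_of_le hb0 with hb1 | hb1
  · have hcr0 : |cr| = 0 := by
      by_contra hne
      have hpos : 0 < |cr| := lt_of_le_of_ne (abs_nonneg _) (Ne.symm hne)
      have h := key ((a + 1) / (2 * |cr|)) (by positivity)
      rw [← hb1] at h
      have h2 : 2 * ((a + 1) / (2 * |cr|)) * |cr| = a + 1 := by field_simp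
      nlinarith [h]
    rw [hcr0]; positivity
  · have h := key (|cr| / b) (by positivity)
    have h3 : |cr| ^ 2 ≤ a * b := by
      have e1 : 2 * (|cr| / b) * |cr| = 2 * (|cr| ^ 2 / b) := by ring
      have e2 : (|cr| / b) ^ 2 * b = |cr| ^ 2 / b := by
        field_simp
      rw [e1, e2] at h
      have := (div_le_iff₀ hb1).mp (by linarith : |cr| ^ 2 / b ≤ a)
      linarith [this]
    calc |cr| = Real.sqrt (|cr| ^ 2) := (Real.sqrt_sq (abs_nonneg _)).symm
    _ ≤ Real.sqrt (a * b) := Real.sqrt_le_sqrt h3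
    _ = Real.sqrt a * Real.sqrt b := Real.sqrt_mul ha0 b

/-- The real-valued mutual energy. -/
noncomputable def ee (κ : X → X → ℝ≥0∞) (μ ν : Measure X) : ℝ := (energy κ μ ν).toReal

/-- The real-valued squared energy distance. -/
noncomputable def qq (κ : X → X → ℝ≥0∞) (μ ν : Measure X) : ℝ :=
  ee κ μ μ + ee κ ν ν - 2 * ee κ μ ν

lemma sDist_eq_sqrt_qq (μ ν : Measure X) : sDist κ μ ν = Real.sqrt (qq κ μ ν) := rfl

lemma sDist_nonneg' (μ ν : Measure X) : 0 ≤ sDist κ μ ν := Real.sqrt_nonneg _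

lemma ee_nonneg (μ ν : Measure X) : 0 ≤ ee κ μ ν := ENNReal.toReal_nonneg

lemma ee_symm (hκ : IsKernel κ) {μ ν : Measure X} (hμ : memE κ μ) (hν : memE κ ν) :
    ee κ μ ν = ee κ ν μ := by
  haveI := hμ.1.sigmaFinite; haveI := hν.1.sigmaFinite
  rw [ee, ee, energy_symm hκ]

lemma two_mul_ee_le (hpd : StrictlyPosDef κ) {μ ν : Measure X}
    (hμ : memE κ μ) (hν : memE κ ν) :
    2 * ee κ μ ν ≤ ee κ μ μ + ee κ ν ν := by
  have h := (hpd μ ν hμ.1 hν.1 hμ.2 hν.2).1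
  have h2 : ((2 : ℝ≥0∞) * energy κ μ ν).toReal ≤ (energy κ μ μ + energy κ ν ν).toReal :=
    ENNReal.toReal_mono (ENNReal.add_lt_top.mpr ⟨hμ.2, hν.2⟩).ne h
  rw [ENNReal.toReal_mul, ENNReal.toReal_add hμ.2.ne hν.2.ne] at h2
  simpa [ee] using h2

lemma qq_nonneg (hpd : StrictlyPosDef κ) {μ ν : Measure X}
    (hμ : memE κ μ) (hν : memE κ ν) : 0 ≤ qq κ μ ν := by
  have := two_mul_ee_le hpd hμ hν
  simp only [qq]; linarith

lemma sDist_sq (hpd : StrictlyPosDef κ) {μ ν : Measure X}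
    (hμ : memE κ μ) (hν : memE κ ν) : sDist κ μ ν ^ 2 = qq κ μ ν := by
  rw [sDist_eq_sqrt_qq, Real.sq_sqrt (qq_nonneg hpd hμ hν)]

lemma memE.add (hκ : IsKernel κ) (hpd : StrictlyPosDef κ) {μ ν : Measure X}
    (hμ : memE κ μ) (hν : memE κ ν) : memE κ (μ + ν) := by
  haveI := hμ.1.finiteOnCompacts; haveI := hν.1.finiteOnCompacts
  haveI := hμ.1.sigmaFinite; haveI := hν.1.sigmaFinite
  haveI : IsFiniteMeasureOnCompacts (μ + ν) := by
    refine ⟨fun K hK => ?_⟩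
    rw [Measure.add_apply]
    exact ENNReal.add_lt_top.mpr ⟨hK.measure_lt_top, hK.measure_lt_top⟩
  refine ⟨isRadon_of_finiteOnCompacts _, ?_⟩
  rw [FiniteEnergy, energy_add_left, energy_add_right hκ, energy_add_right hκ]
  have c1 := energy_cross_ne_top hpd hμ hν
  have c2 := energy_cross_ne_top hpd hν hμ
  exact ENNReal.add_lt_top.mpr ⟨ENNReal.add_lt_top.mpr ⟨hμ.2, c1.lt_top⟩,
    ENNReal.add_lt_top.mpr ⟨c2.lt_top, hν.2⟩⟩

lemma memE.smul (hκ : IsKernel κ) {μ : Measure X} (hμ : memE κ μ) {c : ℝ≥0∞} (hc : c ≠ ⊤) :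
    memE κ (c • μ) := by
  haveI : μ.Regular := hμ.1
  refine ⟨MeasureTheory.Measure.Regular.smul hc, ?_⟩
  rw [FiniteEnergy, energy_smul_left]
  haveI := hμ.1.sigmaFinite
  rw [energy_smul_right hκ]
  exact ENNReal.mul_lt_top hc.lt_top (ENNReal.mul_lt_top hc.lt_top hμ.2)

lemma ee_add_left (hpd : StrictlyPosDef κ) {μ ν ρ : Measure X}
    (hμ : memE κ μ) (hν : memE κ ν) (hρ : memE κ ρ) :
    ee κ (μ + ν) ρ = ee κ μ ρ + ee κ ν ρ := by
  rw [ee, energy_add_left,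
    ENNReal.toReal_add (energy_cross_ne_top hpd hμ hρ) (energy_cross_ne_top hpd hν hρ)]
  rfl

lemma ee_add_right (hκ : IsKernel κ) (hpd : StrictlyPosDef κ) {μ ν ρ : Measure X}
    (hρ : memE κ ρ) (hμ : memE κ μ) (hν : memE κ ν) :
    ee κ ρ (μ + ν) = ee κ ρ μ + ee κ ρ ν := by
  haveI := hμ.1.sigmaFinite; haveI := hν.1.sigmaFinite
  rw [ee, energy_add_right hκ,
    ENNReal.toReal_add (energy_cross_ne_top hpd hρ hμ) (energy_cross_ne_top hpd hρ hν)]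
  rfl

lemma ee_smul_left (c : ℝ≥0∞) (μ ν : Measure X) :
    ee κ (c • μ) ν = c.toReal * ee κ μ ν := by
  rw [ee, energy_smul_left, ENNReal.toReal_mul]; rfl

lemma ee_smul_right (hκ : IsKernel κ) (c : ℝ≥0∞) {μ : Measure X} (ν : Measure X)
    (hμ : memE κ μ) : ee κ ν (c • μ) = c.toReal * ee κ ν μ := by
  haveI := hμ.1.sigmaFinite
  rw [ee, energy_smul_right hκ, ENNReal.toReal_mul]; rfl

/-- Full bilinear expansion of `ee` on combinations `a + t•b`, `c + t•d`. -/
lemma ee_expand (hκ : IsKernel κ) (hpd : StrictlyPosDef κ) {a b c d : Measure X}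
    (ha : memE κ a) (hb : memE κ b) (hc : memE κ c) (hd : memE κ d) {t : ℝ} (ht : 0 ≤ t) :
    ee κ (a + ENNReal.ofReal t • b) (c + ENNReal.ofReal t • d)
      = ee κ a c + t * ee κ a d + t * ee κ b c + t ^ 2 * ee κ b d := by
  have hsm : ENNReal.ofReal t ≠ ⊤ := ENNReal.ofReal_ne_top
  have hbs : memE κ (ENNReal.ofReal t • b) := memE.smul hκ hb hsm
  have hds : memE κ (ENNReal.ofReal t • d) := memE.smul hκ hd hsm
  rw [ee_add_left hpd ha hbs (memE.add hκ hpd hc hds),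
    ee_add_right hκ hpd ha hc hds, ee_add_right hκ hpd hbs hc hds,
    ee_smul_left, ee_smul_right hκ _ _ hd, ee_smul_left, ee_smul_right hκ _ _ hd,
    ENNReal.toReal_ofReal ht]
  ring

lemma abs_cr_le (hκ : IsKernel κ) (hpd : StrictlyPosDef κ) {x y z : Measure X}
    (hx : memE κ x) (hy : memE κ y) (hz : memE κ z) :
    |ee κ x y + ee κ y z - ee κ y y - ee κ x z|
      ≤ Real.sqrt (qq κ x y) * Real.sqrt (qq κ y z) := by
  refine cs_aux (qq_nonneg hpd hx hy) (qq_nonneg hpd hy hz) fun t ht => ?_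
  have hsm : ENNReal.ofReal t ≠ ⊤ := ENNReal.ofReal_ne_top
  constructor
  · have h := qq_nonneg hpd
      (memE.add hκ hpd hx (memE.smul hκ hz hsm)) (memE.add hκ hpd hy (memE.smul hκ hy hsm))
    rw [qq, ee_expand hκ hpd hx hz hx hz ht, ee_expand hκ hpd hy hy hy hy ht,
      ee_expand hκ hpd hx hz hy hy ht] at h
    simp only [ee_symm hκ hz hx, ee_symm hκ hz hy, ee_symm hκ hy hx] at h
    simp only [qq]
    nlinarith [h]
  · have h := qq_nonneg hpd
      (memE.add hκ hpd hx (memE.smul hκ hy hsm)) (memE.add hκ hpd hy (memE.smul hκ hz hsm))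
    rw [qq, ee_expand hκ hpd hx hy hx hy ht, ee_expand hκ hpd hy hz hy hz ht,
      ee_expand hκ hpd hx hy hy hz ht] at h
    simp only [ee_symm hκ hy hx, ee_symm hκ hz hy] at h
    simp only [qq]
    nlinarith [h]

lemma sDist_triangle (hκ : IsKernel κ) (hpd : StrictlyPosDef κ) {x y z : Measure X}
    (hx : memE κ x) (hy : memE κ y) (hz : memE κ z) :
    sDist κ x z ≤ sDist κ x y + sDist κ y z := by
  have habs := abs_cr_le hκ hpd hx hy hz
  have h1 : qq κ x z ≤ (Real.sqrt (qq κ x y) + Real.sqrt (qq κ y z)) ^ 2 := by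
    have e1 : Real.sqrt (qq κ x y) ^ 2 = qq κ x y := Real.sq_sqrt (qq_nonneg hpd hx hy)
    have e2 : Real.sqrt (qq κ y z) ^ 2 = qq κ y z := Real.sq_sqrt (qq_nonneg hpd hy hz)
    have hcr' : ee κ x y + ee κ y z - ee κ y y - ee κ x z
        ≤ |ee κ x y + ee κ y z - ee κ y y - ee κ x z| := le_abs_self _
    have hid : qq κ x z = qq κ x y + qq κ y z
        + 2 * (ee κ x y + ee κ y z - ee κ y y - ee κ x z) := by
      simp only [qq]; ring
    nlinarith [habs, hcr']
  rw [sDist_eq_sqrt_qq, sDist_eq_sqrt_qq, sDist_eq_sqrt_qq]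
  calc Real.sqrt (qq κ x z) ≤ Real.sqrt ((Real.sqrt (qq κ x y) + Real.sqrt (qq κ y z)) ^ 2) :=
        Real.sqrt_le_sqrt h1
  _ = Real.sqrt (qq κ x y) + Real.sqrt (qq κ y z) := Real.sqrt_sq (by positivity)

/-- Parallelogram-type identity used for the projection argument. -/
lemma qq_parallelogram (hκ : IsKernel κ) (hpd : StrictlyPosDef κ) {w x y : Measure X}
    (hw : memE κ w) (hx : memE κ x) (hy : memE κ y) :
    qq κ x y = 2 * qq κ w x + 2 * qq κ w y - 4 * qq κ w ((2 : ℝ≥0∞)⁻¹ • (x + y)) := by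
  have hhalf : ((2 : ℝ≥0∞)⁻¹).toReal = 1 / 2 := by simp
  have hxy : memE κ (x + y) := memE.add hκ hpd hx hy
  have e1 : ee κ w ((2 : ℝ≥0∞)⁻¹ • (x + y)) = 1 / 2 * (ee κ w x + ee κ w y) := by
    rw [ee_smul_right hκ _ _ hxy, ee_add_right hκ hpd hw hx hy, hhalf]
  have e2 : ee κ ((2 : ℝ≥0∞)⁻¹ • (x + y)) ((2 : ℝ≥0∞)⁻¹ • (x + y))
      = 1 / 4 * (ee κ x x + ee κ x y + ee κ y x + ee κ y y) := by
    rw [ee_smul_left, ee_smul_right hκ _ _ hxy, ee_add_left hpd hx hy hxy,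
      ee_add_right hκ hpd hx hx hy, ee_add_right hκ hpd hy hx hy, hhalf]
    ring
  rw [ee_symm hκ hy hx] at e2
  simp only [qq, e1, e2]
  ring

lemma energy_restrict_le {μ : Measure X} (s t : Set X) :
    energy κ (μ.restrict s) (μ.restrict t) ≤ energy κ μ μ :=
  energy_mono Measure.restrict_le_self Measure.restrict_le_self

/-- The squared distance from `μ` to its restriction is the energy of the remainder. -/
lemma qq_restrict_eq (hκ : IsKernel κ) {μ : Measure X} (hfin : energy κ μ μ ≠ ⊤) [SFinite μ]
    {C : Set X} (hC : MeasurableSet C) :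
    qq κ μ (μ.restrict C) = (energy κ (μ.restrict Cᶜ) (μ.restrict Cᶜ)).toReal := by
  have hsplit : μ.restrict C + μ.restrict Cᶜ = μ := Measure.restrict_add_restrict_compl hC
  have f1 : energy κ (μ.restrict C) (μ.restrict C) ≠ ⊤ := (energy_restrict_le _ _).trans_lt hfin.lt_top |>.ne
  have f2 : energy κ (μ.restrict C) (μ.restrict Cᶜ) ≠ ⊤ := (energy_restrict_le _ _).trans_lt hfin.lt_top |>.ne
  have f3 : energy κ (μ.restrict Cᶜ) (μ.restrict C) ≠ ⊤ := (energy_restrict_le _ _).trans_lt hfin.lt_top |>.ne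
  have f4 : energy κ (μ.restrict Cᶜ) (μ.restrict Cᶜ) ≠ ⊤ := (energy_restrict_le _ _).trans_lt hfin.lt_top |>.ne
  have hsym : energy κ (μ.restrict C) (μ.restrict Cᶜ) = energy κ (μ.restrict Cᶜ) (μ.restrict C) :=
    energy_symm hκ _ _
  have e1 : energy κ μ μ
      = energy κ (μ.restrict C) (μ.restrict C) + energy κ (μ.restrict C) (μ.restrict Cᶜ)
        + (energy κ (μ.restrict Cᶜ) (μ.restrict C) + energy κ (μ.restrict Cᶜ) (μ.restrict Cᶜ)) := by
    have h := energy_add_left (κ := κ) (μ.restrict C) (μ.restrict Cᶜ) (μ.restrict C + μ.restrict Cᶜ)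
    rw [energy_add_right hκ (μ.restrict C) (μ.restrict C) (μ.restrict Cᶜ),
      energy_add_right hκ (μ.restrict Cᶜ) (μ.restrict C) (μ.restrict Cᶜ)] at h
    rw [hsplit] at h
    exact h
  have e2 : energy κ μ (μ.restrict C)
      = energy κ (μ.restrict C) (μ.restrict C) + energy κ (μ.restrict Cᶜ) (μ.restrict C) := by
    have h := energy_add_left (κ := κ) (μ.restrict C) (μ.restrict Cᶜ) (μ.restrict C)
    rw [hsplit] at h
    exact h
  simp only [qq, ee, e1, e2]
  rw [ENNReal.toReal_add (by rw [ENNReal.add_ne_top]; exact ⟨f1, f2⟩)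
      (by rw [ENNReal.add_ne_top]; exact ⟨f3, f4⟩),
    ENNReal.toReal_add f1 f2, ENNReal.toReal_add f3 f4, ENNReal.toReal_add f1 f3, hsym]
  ring

lemma capC_ne_zero_of_restrict (hκ : IsKernel κ) {σ : Measure X} {K : Set X}
    (hKm : MeasurableSet K) (h0 : σ K ≠ 0) (hfin : σ K ≠ ⊤)
    (hE : energy κ (σ.restrict K) (σ.restrict K) ≠ ⊤) [SFinite σ] :
    capC κ K ≠ 0 := by
  intro hc
  have hp : IsProbabilityMeasure ((σ K)⁻¹ • σ.restrict K) := by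
    constructor
    rw [Measure.smul_apply, Measure.restrict_apply MeasurableSet.univ, Set.univ_inter,
      smul_eq_mul, ENNReal.inv_mul_cancel h0 hfin]
  have hl : ((σ K)⁻¹ • σ.restrict K) Kᶜ = 0 := by
    rw [Measure.smul_apply, Measure.restrict_apply hKm.compl, Set.compl_inter_self]
    simp
  have htop := energy_eq_top_of_capC_eq_zero hc hp hl
  rw [energy_smul_left, energy_smul_right hκ] at htop
  exact ENNReal.mul_ne_top (ENNReal.inv_ne_top.mpr h0)
    (ENNReal.mul_ne_top (ENNReal.inv_ne_top.mpr h0) hE) htop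

/-- A measurable set `W` with `innerCap (B ∩ W) = 0` is null for every finite-energy
measure concentrated on `B`. -/
lemma measure_zero_of_innerCap_zero (hκ : IsKernel κ) {B W : Set X} (hW : MeasurableSet W)
    {σ : Measure X} (hσR : IsRadon σ) (hσfin : FiniteEnergy κ σ)
    (hconc : σ Bᶜ = 0) (hcap : innerCap κ (B ∩ W) = 0) : σ W = 0 := by
  haveI : σ.Regular := hσR
  haveI := hσR.sigmaFinite
  by_contra hne
  obtain ⟨N, hBN, hNmeas, hN0⟩ := exists_measurable_superset_of_null hconc
  have hW' : σ (W ∩ Nᶜ) ≠ 0 := by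
    intro h0
    apply hne
    have hsub : W ⊆ (W ∩ Nᶜ) ∪ N := by
      intro x hx
      by_cases hxN : x ∈ N
      · exact Or.inr hxN
      · exact Or.inl ⟨hx, hxN⟩
    have := (measure_mono hsub).trans (measure_union_le (μ := σ) _ _)
    rw [h0, hN0, add_zero] at this
    exact le_antisymm this (zero_le)
  obtain ⟨K, hKsub, hKcomp, hKpos⟩ :=
    (hW.inter hNmeas.compl).exists_lt_isCompact (pos_iff_ne_zero.mpr hW')
  have hKB : K ⊆ B ∩ W := fun x hx =>
    ⟨compl_subset_comm.mp hBN (hKsub hx).2, (hKsub hx).1⟩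
  have hcapK : capC κ K = 0 :=
    le_antisymm (hcap ▸ capC_le_innerCap hKcomp hKB) (zero_le)
  exact capC_ne_zero_of_restrict hκ hKcomp.isClosed.measurableSet
    hKpos.ne' (hKcomp.measure_lt_top).ne
    ((energy_restrict_le _ _).trans_lt hσfin).ne hcapK

/-- Binary subadditivity of inner capacity on measurable slices of a common set. -/
lemma innerCap_inter_union_zero (hκ : IsKernel κ) {A W1 W2 : Set X}
    (hW1 : MeasurableSet W1) (hW2 : MeasurableSet W2)
    (h1 : innerCap κ (A ∩ W1) = 0) (h2 : innerCap κ (A ∩ W2) = 0) :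
    innerCap κ (A ∩ (W1 ∪ W2)) = 0 := by
  rw [innerCap_eq_zero_iff]
  intro K hK hKsub
  by_contra hc
  -- there is a probability measure on K with finite energy
  have hinf : (⨅ (μ : Measure X) (_ : IsProbabilityMeasure μ) (_ : μ Kᶜ = 0),
      energy κ μ μ) < ⊤ := by
    rw [lt_top_iff_ne_top]
    intro h
    exact hc (by rw [capC, h, ENNReal.inv_top])
  simp only [iInf_lt_iff] at hinf
  obtain ⟨lam, hp, hl, hEfin⟩ := hinf
  haveI := hp
  have hKm : MeasurableSet K := hK.isClosed.measurableSet
  have hK1 : lam K = 1 := by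
    have h := measure_add_measure_compl hKm (μ := lam)
    rw [hl, add_zero, measure_univ] at h
    exact h
  have main : ∀ W : Set X, MeasurableSet W → innerCap κ (A ∩ W) = 0 → lam W ≠ 0 → False := by
    intro W hWm hWcap hWne
    have hint : lam (W ∩ K) ≠ 0 := by
      intro h0
      apply hWne
      have hsub : W ⊆ (W ∩ K) ∪ Kᶜ := by
        intro x hx
        by_cases hxK : x ∈ K
        · exact Or.inl ⟨hx, hxK⟩
        · exact Or.inr hxK
      have := (measure_mono hsub).trans (measure_union_le (μ := lam) _ _)
      rw [h0, hl, add_zero] at this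
      exact le_antisymm this (zero_le)
    obtain ⟨K1, hK1sub, hK1comp, hK1pos⟩ :=
      (hWm.inter hKm).exists_lt_isCompact (pos_iff_ne_zero.mpr hint)
    have hK1AW : K1 ⊆ A ∩ W := fun x hx =>
      ⟨(hKsub (hK1sub hx).2).1, (hK1sub hx).1⟩
    have hcapK1 : capC κ K1 = 0 :=
      le_antisymm (hWcap ▸ capC_le_innerCap hK1comp hK1AW) (zero_le)
    exact capC_ne_zero_of_restrict hκ hK1comp.isClosed.measurableSet
      hK1pos.ne' (measure_ne_top lam K1)
      ((energy_restrict_le _ _).trans_lt hEfin).ne hcapK1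
  by_cases hw1 : lam W1 = 0
  · refine main W2 hW2 h2 ?_
    intro hw2
    have : lam K ≤ lam W1 + lam W2 := by
      refine (measure_mono ?_).trans (measure_union_le (μ := lam) _ _)
      exact fun x hx => (hKsub hx).2
    rw [hK1, hw1, hw2, add_zero] at this
    exact one_ne_zero (le_antisymm this (zero_le))
  · exact main W1 hW1 h1 hw1

lemma measurableSet_pot_lt (hκ : IsKernel κ) (μ ν : Measure X) [SFinite μ] [SFinite ν] :
    MeasurableSet {x | potential κ μ x < potential κ ν x} :=
  measurableSet_lt (measurable_potential hκ μ) (measurable_potential hκ ν)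

lemma measurableSet_pot_not_le (hκ : IsKernel κ) (μ ν : Measure X) [SFinite μ] [SFinite ν] :
    MeasurableSet {x | ¬ potential κ μ x ≤ potential κ ν x} := by
  have : {x | ¬ potential κ μ x ≤ potential κ ν x}
      = {x | potential κ ν x < potential κ μ x} := by
    ext x; simp [not_le]
  rw [this]
  exact measurableSet_pot_lt hκ ν μ

lemma measurableSet_pot_ne (hκ : IsKernel κ) (μ ν : Measure X) [SFinite μ] [SFinite ν] :
    MeasurableSet {x | potential κ μ x ≠ potential κ ν x} := by
  have : {x | potential κ μ x ≠ potential κ ν x}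
      = {x | potential κ μ x < potential κ ν x} ∪ {x | potential κ ν x < potential κ μ x} := by
    ext x
    simp only [Set.mem_setOf_eq, Set.mem_union]
    exact ne_iff_lt_or_gt
  rw [this]
  exact (measurableSet_pot_lt hκ μ ν).union (measurableSet_pot_lt hκ ν μ)

/-- Layer-cake representation for `ℝ≥0∞`-valued functions. -/
lemma lintegral_eq_layer (μ : Measure X) [SigmaFinite μ] {f : X → ℝ≥0∞} (hf : Measurable f) :
    ∫⁻ x, f x ∂μ = ∫⁻ t, μ {x | ENNReal.ofReal t < f x} ∂(volume.restrict (Set.Ioi (0:ℝ))) := by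
  have hE : MeasurableSet {p : X × ℝ | ENNReal.ofReal p.2 < f p.1} := by
    apply measurableSet_lt
    · exact ENNReal.measurable_ofReal.comp measurable_snd
    · exact hf.comp measurable_fst
  have hFmeas : Measurable fun p : X × ℝ =>
      Set.indicator {p : X × ℝ | ENNReal.ofReal p.2 < f p.1} (fun _ => (1:ℝ≥0∞)) p :=
    measurable_const.indicator hE
  have pointwise : ∀ x, ∫⁻ t, Set.indicator {p : X × ℝ | ENNReal.ofReal p.2 < f p.1}
      (fun _ => (1:ℝ≥0∞)) (x, t) ∂(volume.restrict (Set.Ioi (0:ℝ))) = f x := by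
    intro x
    have hind : ∀ t : ℝ, Set.indicator {p : X × ℝ | ENNReal.ofReal p.2 < f p.1}
        (fun _ => (1:ℝ≥0∞)) (x, t) = Set.indicator {t : ℝ | ENNReal.ofReal t < f x}
        (fun _ => (1:ℝ≥0∞)) t := by
      intro t
      by_cases h : ENNReal.ofReal t < f x <;> simp [Set.indicator, h]
    simp_rw [hind]
    have hSm : MeasurableSet {t : ℝ | ENNReal.ofReal t < f x} := by
      apply measurableSet_lt ENNReal.measurable_ofReal measurable_const
    rw [lintegral_indicator hSm, setLIntegral_one, Measure.restrict_apply hSm]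
    rcases eq_or_ne (f x) ⊤ with hfx | hfx
    · have : {t : ℝ | ENNReal.ofReal t < f x} ∩ Set.Ioi 0 = Set.Ioi 0 := by
        rw [Set.inter_eq_right]
        intro t _
        simp [hfx]
      rw [this, Real.volume_Ioi]
      exact hfx.symm
    · have : {t : ℝ | ENNReal.ofReal t < f x} ∩ Set.Ioi 0 = Set.Ioo 0 (f x).toReal := by
        ext t
        simp only [Set.mem_inter_iff, Set.mem_setOf_eq, Set.mem_Ioi, Set.mem_Ioo]
        constructor
        · rintro ⟨hlt, ht⟩
          exact ⟨ht, (ENNReal.ofReal_lt_iff_lt_toReal ht.le hfx).mp hlt⟩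
        · rintro ⟨ht, hlt⟩
          exact ⟨(ENNReal.ofReal_lt_iff_lt_toReal ht.le hfx).mpr hlt, ht⟩
      rw [this, Real.volume_Ioo, sub_zero, ENNReal.ofReal_toReal hfx]
  calc ∫⁻ x, f x ∂μ
      = ∫⁻ x, ∫⁻ t, Set.indicator {p : X × ℝ | ENNReal.ofReal p.2 < f p.1}
          (fun _ => (1:ℝ≥0∞)) (x, t) ∂(volume.restrict (Set.Ioi (0:ℝ))) ∂μ := by
        refine lintegral_congr fun x => (pointwise x).symm
  _ = ∫⁻ t, ∫⁻ x, Set.indicator {p : X × ℝ | ENNReal.ofReal p.2 < f p.1}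
          (fun _ => (1:ℝ≥0∞)) (x, t) ∂μ ∂(volume.restrict (Set.Ioi (0:ℝ))) :=
        lintegral_lintegral_swap hFmeas.aemeasurable
  _ = ∫⁻ t, μ {x | ENNReal.ofReal t < f x} ∂(volume.restrict (Set.Ioi (0:ℝ))) := by
        refine lintegral_congr fun t => ?_
        have hind : ∀ x : X, Set.indicator {p : X × ℝ | ENNReal.ofReal p.2 < f p.1}
            (fun _ => (1:ℝ≥0∞)) (x, t) = Set.indicator {x : X | ENNReal.ofReal t < f x}
            (fun _ => (1:ℝ≥0∞)) x := by
          intro x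
          by_cases h : ENNReal.ofReal t < f x <;> simp [Set.indicator, h]
        simp_rw [hind]
        rw [lintegral_indicator (by exact measurableSet_lt measurable_const hf), setLIntegral_one]

/-- Open sets: lower bound of measures along a vaguely convergent sequence. -/
lemma measure_open_le_liminf_of_vague {θs : ℕ → Measure X} {μ0 : Measure X}
    (hθR : ∀ m, IsRadon (θs m)) (hμR : IsRadon μ0) (hvague : VagueTendsto θs μ0)
    {G : Set X} (hG : IsOpen G) : μ0 G ≤ atTop.liminf fun m => θs m G := by
  haveI : μ0.Regular := hμR
  refine le_of_forall_lt fun r hr => ?_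
  obtain ⟨K, hKG, hKcomp, hKr⟩ := hG.exists_lt_isCompact hr
  refine hKr.trans_le ?_
  -- Urysohn function
  obtain ⟨fc, hf1, hf0, hfsupp, hf01⟩ := exists_continuous_one_zero_of_isCompact hKcomp
    hG.isClosed_compl (disjoint_compl_right_iff_subset.mpr hKG)
  have hint : ∀ (σ : Measure X), IsRadon σ →
      ∫⁻ x, ENNReal.ofReal (fc x) ∂σ ≠ ⊤ ∧
      ∫⁻ x, ENNReal.ofReal (fc x) ∂σ = ENNReal.ofReal (∫ x, fc x ∂σ) := by
    intro σ hσ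
    haveI : σ.Regular := hσ
    have hb : ∫⁻ x, ENNReal.ofReal (fc x) ∂σ ≤ σ (tsupport fc) := by
      have : ∀ x, ENNReal.ofReal (fc x) ≤ Set.indicator (tsupport fc) (fun _ => (1:ℝ≥0∞)) x := by
        intro x
        by_cases hx : x ∈ tsupport fc
        · simp only [Set.indicator_of_mem hx]
          exact ENNReal.ofReal_le_one.mpr (hf01 x).2
        · rw [image_eq_zero_of_notMem_tsupport hx]
          simp
      refine (lintegral_mono this).trans ?_
      rw [lintegral_indicator (isClosed_tsupport fc).measurableSet, setLIntegral_one]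
    have hne : ∫⁻ x, ENNReal.ofReal (fc x) ∂σ ≠ ⊤ :=
      (hb.trans_lt hfsupp.isCompact.measure_lt_top).ne
    refine ⟨hne, ?_⟩
    rw [integral_eq_lintegral_of_nonneg_ae (Eventually.of_forall fun x => (hf01 x).1)
      fc.continuous.measurable.aestronglyMeasurable, ENNReal.ofReal_toReal hne]
  have hKbound : μ0 K ≤ ENNReal.ofReal (∫ x, fc x ∂μ0) := by
    rw [← (hint μ0 hμR).2]
    have : ∀ x, Set.indicator K (fun _ => (1:ℝ≥0∞)) x ≤ ENNReal.ofReal (fc x) := by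
      intro x
      by_cases hx : x ∈ K
      · simp only [Set.indicator_of_mem hx, hf1 hx]
        norm_num
      · simp [Set.indicator_of_notMem hx]
    calc μ0 K = ∫⁻ x, Set.indicator K (fun _ => (1:ℝ≥0∞)) x ∂μ0 := by
          rw [lintegral_indicator hKcomp.isClosed.measurableSet, setLIntegral_one]
    _ ≤ _ := lintegral_mono this
  have hGbound : ∀ m, ENNReal.ofReal (∫ x, fc x ∂(θs m)) ≤ θs m G := by
    intro m
    rw [← (hint (θs m) (hθR m)).2]
    have : ∀ x, ENNReal.ofReal (fc x) ≤ Set.indicator G (fun _ => (1:ℝ≥0∞)) x := by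
      intro x
      by_cases hx : x ∈ G
      · simp only [Set.indicator_of_mem hx]
        exact ENNReal.ofReal_le_one.mpr (hf01 x).2
      · have : fc x = 0 := hf0 hx
        simp [this]
    refine (lintegral_mono this).trans ?_
    rw [lintegral_indicator hG.measurableSet, setLIntegral_one]
  have hlim : Tendsto (fun m => ENNReal.ofReal (∫ x, fc x ∂(θs m))) atTop
      (nhds (ENNReal.ofReal (∫ x, fc x ∂μ0))) :=
    (ENNReal.continuous_ofReal.tendsto _).comp
      (hvague fc fc.continuous hfsupp)
  calc μ0 K ≤ ENNReal.ofReal (∫ x, fc x ∂μ0) := hKbound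
  _ = atTop.liminf fun m => ENNReal.ofReal (∫ x, fc x ∂(θs m)) := hlim.liminf_eq.symm
  _ ≤ atTop.liminf fun m => θs m G :=
      liminf_le_liminf (Eventually.of_forall hGbound)

/-- Lower semicontinuous integrands: lower bound along a vaguely convergent sequence. -/
lemma lintegral_le_liminf_of_vague {θs : ℕ → Measure X} {μ0 : Measure X}
    (hθR : ∀ m, IsRadon (θs m)) (hμR : IsRadon μ0) (hvague : VagueTendsto θs μ0)
    {f : X → ℝ≥0∞} (hf : LowerSemicontinuous f) :
    ∫⁻ x, f x ∂μ0 ≤ atTop.liminf fun m => ∫⁻ x, f x ∂(θs m) := by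
  haveI := hμR.sigmaFinite
  haveI := fun m => (hθR m).sigmaFinite
  rw [lintegral_eq_layer μ0 hf.measurable]
  have step1 : ∀ t : ℝ, μ0 {x | ENNReal.ofReal t < f x}
      ≤ atTop.liminf fun m => θs m {x | ENNReal.ofReal t < f x} := fun t =>
    measure_open_le_liminf_of_vague hθR hμR hvague (hf.isOpen_preimage _)
  calc ∫⁻ t, μ0 {x | ENNReal.ofReal t < f x} ∂(volume.restrict (Set.Ioi (0:ℝ)))
      ≤ ∫⁻ t, (atTop.liminf fun m => θs m {x | ENNReal.ofReal t < f x})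
          ∂(volume.restrict (Set.Ioi (0:ℝ))) := lintegral_mono fun t => step1 t
  _ ≤ atTop.liminf fun m => ∫⁻ t, θs m {x | ENNReal.ofReal t < f x}
          ∂(volume.restrict (Set.Ioi (0:ℝ))) := by
        refine lintegral_liminf_le fun m => ?_
        exact Antitone.measurable fun s t hst =>
          measure_mono fun x hx => lt_of_le_of_lt (ENNReal.ofReal_le_ofReal hst) hx
  _ = atTop.liminf fun m => ∫⁻ x, f x ∂(θs m) := by
        refine Filter.liminf_congr (Eventually.of_forall fun m => ?_)
        exact (lintegral_eq_layer (θs m) hf.measurable).symm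

lemma le_limit_aux {A B : ℝ} (hB : 0 ≤ B)
    (h : ∀ t : ℝ, 0 < t → t ≤ 1 → 0 ≤ A + t * B) : 0 ≤ A := by
  by_contra hA
  push_neg at hA
  have hd : 0 < -A / (2 * (B + 1)) := div_pos (neg_pos.mpr hA) (by linarith)
  have ht0 : 0 < min 1 (-A / (2 * (B + 1))) := lt_min one_pos hd
  have hkey := h _ ht0 (min_le_left _ _)
  have hle : min 1 (-A / (2 * (B + 1))) ≤ -A / (2 * (B + 1)) := min_le_right _ _
  have hmul : min 1 (-A / (2 * (B + 1))) * B ≤ -A / (2 * (B + 1)) * B :=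
    mul_le_mul_of_nonneg_right hle hB
  have h2 : -A / (2 * (B + 1)) * B < -A := by
    rw [div_mul_eq_mul_div, div_lt_iff₀ (by linarith : (0:ℝ) < 2 * (B + 1))]
    nlinarith
  linarith

lemma memEOn.zero (C : Set X) : memEOn κ C (0 : Measure X) := by
  refine ⟨⟨?_, ?_⟩, by simp⟩
  · exact MeasureTheory.Measure.Regular.zero
  · rw [FiniteEnergy]
    have : energy κ (0 : Measure X) 0 = 0 := lintegral_zero_measure _
    rw [this]; exact ENNReal.zero_lt_top

/-- Orthogonal projection of a finite-energy measure onto `E⁺(C)`, `C` compact. -/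
lemma exists_projection (hκ : IsKernel κ) (hpf : Perfect κ) {w : Measure X} (hw : memE κ w)
    {C : Set X} (hC : IsCompact C) :
    ∃ θ, memEOn κ C θ ∧
      (∀ lam, memEOn κ C lam → sDist κ w θ ≤ sDist κ w lam) ∧
      (∀ σ, memEOn κ C σ → energy κ σ w ≤ energy κ σ θ) ∧
      energy κ θ w = energy κ θ θ := by
  have hpd := hpf.posdef
  set S : Set ℝ := {r : ℝ | ∃ lam, memEOn κ C lam ∧ sDist κ w lam = r} with hS
  have hSne : S.Nonempty := ⟨sDist κ w 0, 0, memEOn.zero C, rfl⟩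
  have hbdd : BddBelow S := ⟨0, by rintro r ⟨lam, _, rfl⟩; exact sDist_nonneg' _ _⟩
  set d : ℝ := sInf S with hd
  have hd0 : 0 ≤ d := le_csInf hSne (by rintro r ⟨lam, _, rfl⟩; exact sDist_nonneg' _ _)
  have hdle : ∀ lam, memEOn κ C lam → d ≤ sDist κ w lam := fun lam hlam =>
    csInf_le hbdd ⟨lam, hlam, rfl⟩
  have hmin : ∀ n : ℕ, ∃ lam, memEOn κ C lam ∧ sDist κ w lam < d + 1 / (n + 1) := by
    intro n
    have hlt : d < d + 1 / (n + 1) := by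
      have : (0:ℝ) < 1 / (n + 1) := by positivity
      linarith
    obtain ⟨r, ⟨lam, hlam, rfl⟩, hr⟩ := (csInf_lt_iff hbdd hSne).mp hlt
    exact ⟨lam, hlam, hr⟩
  choose σs hσmem hσlt using hmin
  have hσE : ∀ n, memE κ (σs n) := fun n => (hσmem n).1
  -- quadratic bounds
  have hqup : ∀ n : ℕ, qq κ w (σs n) < (d + 1 / (n + 1)) ^ 2 := by
    intro n
    rw [← sDist_sq hpd hw (hσE n)]
    have h1 := sDist_nonneg' (κ := κ) w (σs n)
    have h2 := hσlt n
    nlinarith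
  have hqlow : ∀ lam, memEOn κ C lam → d ^ 2 ≤ qq κ w lam := by
    intro lam hlam
    rw [← sDist_sq hpd hw hlam.1]
    have := hdle lam hlam
    nlinarith [sDist_nonneg' (κ := κ) w lam]
  -- the midpoint of two competitors is a competitor
  have hmid : ∀ n m : ℕ, memEOn κ C ((2 : ℝ≥0∞)⁻¹ • (σs n + σs m)) := by
    intro n m
    refine ⟨memE.smul hκ (memE.add hκ hpd (hσE n) (hσE m)) (by simp), ?_⟩
    simp [Measure.smul_apply, Measure.add_apply, (hσmem n).2, (hσmem m).2]
  -- Cauchy property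
  have hq : ∀ n m : ℕ, qq κ (σs n) (σs m) ≤ (4 * d + 2) * (1 / (n + 1) + 1 / (m + 1)) := by
    intro n m
    have hpar := qq_parallelogram hκ hpd hw (hσE n) (hσE m)
    have h1 := hqup n
    have h2 := hqup m
    have h3 := hqlow _ (hmid n m)
    have hen : (0:ℝ) < 1 / (n + 1) := by positivity
    have hen1 : (1:ℝ) / (n + 1) ≤ 1 := by
      rw [div_le_one (by positivity)]
      have : (0:ℝ) ≤ (n : ℝ) := Nat.cast_nonneg n
      linarith
    have hem : (0:ℝ) < 1 / (m + 1) := by positivity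
    have hem1 : (1:ℝ) / (m + 1) ≤ 1 := by
      rw [div_le_one (by positivity)]
      have : (0:ℝ) ≤ (m : ℝ) := Nat.cast_nonneg m
      linarith
    nlinarith
  have hcauchy : ∀ ε : ℝ, 0 < ε → ∃ N, ∀ n ≥ N, ∀ m ≥ N,
      sDist κ (σs n) (σs m) < ε := by
    intro ε hε
    obtain ⟨N, hN⟩ := exists_nat_gt ((4 * d + 2) * 2 / ε ^ 2)
    refine ⟨N, fun n hn m hm => ?_⟩
    have hb : qq κ (σs n) (σs m) < ε ^ 2 := by
      refine (hq n m).trans_lt ?_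
      have h1 : (1:ℝ) / (n + 1) ≤ 1 / (N + 1) := by
        apply div_le_div_of_nonneg_left one_pos.le (by positivity)
        have : (N:ℝ) ≤ (n:ℝ) := Nat.cast_le.mpr hn
        linarith
      have h2 : (1:ℝ) / (m + 1) ≤ 1 / (N + 1) := by
        apply div_le_div_of_nonneg_left one_pos.le (by positivity)
        have : (N:ℝ) ≤ (m:ℝ) := Nat.cast_le.mpr hm
        linarith
      have hd2 : (0:ℝ) < 4 * d + 2 := by linarith
      have hkey : (4 * d + 2) * (2 / (N + 1)) < ε ^ 2 := by
        rw [show (4 * d + 2) * (2 / ((N:ℝ) + 1)) = (4 * d + 2) * 2 / ((N:ℝ) + 1) from by ring,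
          div_lt_iff₀ (by positivity : (0:ℝ) < (N:ℝ) + 1)]
        rw [div_lt_iff₀ (by positivity : (0:ℝ) < ε ^ 2)] at hN
        nlinarith
      calc (4 * d + 2) * (1 / (n + 1) + 1 / (m + 1))
          ≤ (4 * d + 2) * (1 / (N + 1) + 1 / (N + 1)) := by
            apply mul_le_mul_of_nonneg_left (by linarith) (by linarith)
      _ = (4 * d + 2) * (2 / (N + 1)) := by ring_nf
      _ < ε ^ 2 := hkey
    rw [sDist_eq_sqrt_qq]
    calc Real.sqrt (qq κ (σs n) (σs m)) < Real.sqrt (ε ^ 2) := by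
          apply (Real.sqrt_lt_sqrt (qq_nonneg hpd (hσE n) (hσE m)) hb)
    _ = ε := Real.sqrt_sq hε.le
  obtain ⟨θ, hθE, hconv⟩ := hpf.complete σs hσE hcauchy
  -- θ is carried by C
  have hvague : VagueTendsto σs θ := hpf.finerThanVague σs θ hσE hθE hconv
  have hθC : θ Cᶜ = 0 := by
    by_contra hne
    haveI : θ.Regular := hθE.1
    haveI := hθE.1.sigmaFinite
    obtain ⟨K', hK'sub, hK'comp, hK'pos⟩ :=
      hC.isClosed.measurableSet.compl.exists_lt_isCompact (pos_iff_ne_zero.mpr hne)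
    obtain ⟨fc, hf1, hf0, hfsupp, hf01⟩ := exists_continuous_one_zero_of_isCompact hK'comp
      hC.isClosed (Set.disjoint_left.mpr fun _ hx => hK'sub hx)
    have hzero : ∀ n, ∫ x, fc x ∂(σs n) = 0 := by
      intro n
      refine integral_eq_zero_of_ae ?_
      have hae : ∀ᵐ x ∂(σs n), x ∈ C := by
        rw [ae_iff]
        have : {x | ¬ x ∈ C} = Cᶜ := rfl
        rw [this]
        exact (hσmem n).2
      filter_upwards [hae] with x hx
      exact hf0 hx
    have hlim0 : Tendsto (fun n => ∫ x, fc x ∂(σs n)) atTop (nhds (∫ x, fc x ∂θ)) :=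
      hvague fc fc.continuous hfsupp
    have hint0 : ∫ x, fc x ∂θ = 0 := by
      have : Tendsto (fun _ : ℕ => (0:ℝ)) atTop (nhds (∫ x, fc x ∂θ)) := by
        refine hlim0.congr fun n => (hzero n)
      exact tendsto_nhds_unique this tendsto_const_nhds
    -- but θ K' > 0
    have hbound : θ K' ≤ ENNReal.ofReal (∫ x, fc x ∂θ) := by
      have hb : ∫⁻ x, ENNReal.ofReal (fc x) ∂θ ≤ θ (tsupport fc) := by
        have hle : ∀ x, ENNReal.ofReal (fc x)
            ≤ Set.indicator (tsupport fc) (fun _ => (1:ℝ≥0∞)) x := by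
          intro x
          by_cases hx : x ∈ tsupport fc
          · simp only [Set.indicator_of_mem hx]
            exact ENNReal.ofReal_le_one.mpr (hf01 x).2
          · rw [image_eq_zero_of_notMem_tsupport hx]; simp
        refine (lintegral_mono hle).trans ?_
        rw [lintegral_indicator (isClosed_tsupport fc).measurableSet, setLIntegral_one]
      have hne' : ∫⁻ x, ENNReal.ofReal (fc x) ∂θ ≠ ⊤ :=
        (hb.trans_lt hfsupp.isCompact.measure_lt_top).ne
      have heq : ∫⁻ x, ENNReal.ofReal (fc x) ∂θ = ENNReal.ofReal (∫ x, fc x ∂θ) := by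
        rw [integral_eq_lintegral_of_nonneg_ae (Eventually.of_forall fun x => (hf01 x).1)
          fc.continuous.measurable.aestronglyMeasurable, ENNReal.ofReal_toReal hne']
      rw [← heq]
      calc θ K' = ∫⁻ x, Set.indicator K' (fun _ => (1:ℝ≥0∞)) x ∂θ := by
            rw [lintegral_indicator hK'comp.isClosed.measurableSet, setLIntegral_one]
      _ ≤ _ := by
            refine lintegral_mono fun x => ?_
            by_cases hx : x ∈ K'
            · simp only [Set.indicator_of_mem hx, hf1 hx]; norm_num
            · simp [Set.indicator_of_notMem hx]
    rw [hint0] at hbound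
    simp only [ENNReal.ofReal_zero, nonpos_iff_eq_zero] at hbound
    exact hK'pos.ne' hbound
  -- distance realization
  have hdist_le : sDist κ w θ ≤ d := by
    have hrhs : Tendsto (fun n : ℕ => d + 1 / ((n:ℝ) + 1) + sDist κ (σs n) θ) atTop
        (nhds (d + 0 + 0)) := by
      refine Tendsto.add (Tendsto.add tendsto_const_nhds
        tendsto_one_div_add_atTop_nhds_zero_nat) hconv
    rw [add_zero, add_zero] at hrhs
    refine ge_of_tendsto hrhs (Eventually.of_forall fun n => ?_)
    calc sDist κ w θ ≤ sDist κ w (σs n) + sDist κ (σs n) θ :=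
          sDist_triangle hκ hpd hw (hσE n) hθE
    _ ≤ d + 1 / (n + 1) + sDist κ (σs n) θ := by
          have := (hσlt n).le
          linarith
  have hdist : sDist κ w θ = d := le_antisymm hdist_le (hdle θ ⟨hθE, hθC⟩)
  have hqθ : qq κ w θ = d ^ 2 := by
    rw [← sDist_sq hpd hw hθE, hdist]
  -- variational inequality
  have hvar : ∀ σ : Measure X, memEOn κ C σ → ee κ w σ ≤ ee κ θ σ := by
    intro σ hσ
    have hσE' : memE κ σ := hσ.1
    have key : ∀ t : ℝ, 0 < t → t ≤ 1 →
        0 ≤ (2 * ee κ θ σ - 2 * ee κ w σ) + t * ee κ σ σ := by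
      intro t ht ht1
      have hmemt : memEOn κ C (θ + ENNReal.ofReal t • σ) := by
        refine ⟨memE.add hκ hpd hθE (memE.smul hκ hσE' ENNReal.ofReal_ne_top), ?_⟩
        simp [Measure.add_apply, Measure.smul_apply, hθC, hσ.2]
      have hlow := hqlow _ hmemt
      have hexp1 : ee κ (θ + ENNReal.ofReal t • σ) (θ + ENNReal.ofReal t • σ)
          = ee κ θ θ + t * ee κ θ σ + t * ee κ σ θ + t ^ 2 * ee κ σ σ :=
        ee_expand hκ hpd hθE hσE' hθE hσE' ht.le
      have hexp2 : ee κ w (θ + ENNReal.ofReal t • σ) = ee κ w θ + t * ee κ w σ := by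
        rw [ee_add_right hκ hpd hw hθE (memE.smul hκ hσE' ENNReal.ofReal_ne_top),
          ee_smul_right hκ _ _ hσE', ENNReal.toReal_ofReal ht.le]
      rw [qq, hexp1, hexp2] at hlow
      rw [ee_symm hκ hσE' hθE] at hlow
      rw [qq] at hqθ
      have hstep : 0 ≤ t * ((2 * ee κ θ σ - 2 * ee κ w σ) + t * ee κ σ σ) := by nlinarith
      exact (mul_nonneg_iff_of_pos_left ht).mp hstep
    have h0 := le_limit_aux (ee_nonneg (κ := κ) σ σ) key
    linarith
  have hvar' : ∀ σ : Measure X, memEOn κ C σ → energy κ σ w ≤ energy κ σ θ := by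
    intro σ hσ
    haveI := hw.1.sigmaFinite
    haveI := hσ.1.1.sigmaFinite
    haveI := hθE.1.sigmaFinite
    have h := hvar σ hσ
    have e1 : energy κ w σ = energy κ σ w := energy_symm hκ w σ
    have e2 : energy κ θ σ = energy κ σ θ := energy_symm hκ θ σ
    rw [show ee κ w σ = (energy κ w σ).toReal from rfl,
      show ee κ θ σ = (energy κ θ σ).toReal from rfl, e1, e2] at h
    exact (ENNReal.toReal_le_toReal (energy_cross_ne_top hpd hσ.1 hw)
      (energy_cross_ne_top hpd hσ.1 hθE)).mp h
  -- the equality ⟨w - θ, θ⟩ = 0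
  have hc1 : ee κ w θ ≤ ee κ θ θ := hvar θ ⟨hθE, hθC⟩
  have key2 : ∀ t : ℝ, 0 < t → t ≤ 1 →
      0 ≤ (2 * ee κ w θ - 2 * ee κ θ θ) + t * ee κ θ θ := by
    intro t ht ht1
    have h1t : (0:ℝ) ≤ 1 - t := by linarith
    have hmemt : memEOn κ C (ENNReal.ofReal (1 - t) • θ) := by
      refine ⟨memE.smul hκ hθE ENNReal.ofReal_ne_top, ?_⟩
      simp [Measure.smul_apply, hθC]
    have hlow := hqlow _ hmemt
    have hexp1 : ee κ (ENNReal.ofReal (1 - t) • θ) (ENNReal.ofReal (1 - t) • θ)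
        = (1 - t) * ((1 - t) * ee κ θ θ) := by
      rw [ee_smul_left, ee_smul_right hκ _ _ hθE, ENNReal.toReal_ofReal h1t]
    have hexp2 : ee κ w (ENNReal.ofReal (1 - t) • θ) = (1 - t) * ee κ w θ := by
      rw [ee_smul_right hκ _ _ hθE, ENNReal.toReal_ofReal h1t]
    rw [qq, hexp1, hexp2] at hlow
    rw [qq] at hqθ
    have hstep : 0 ≤ t * ((2 * ee κ w θ - 2 * ee κ θ θ) + t * ee κ θ θ) := by nlinarith
    exact (mul_nonneg_iff_of_pos_left ht).mp hstep
  have hc2 : ee κ θ θ ≤ ee κ w θ := by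
    have h0 := le_limit_aux (ee_nonneg (κ := κ) θ θ) key2
    linarith
  have heq : energy κ θ w = energy κ θ θ := by
    haveI := hw.1.sigmaFinite
    haveI := hθE.1.sigmaFinite
    have hre : ee κ w θ = ee κ θ θ := le_antisymm hc1 hc2
    have e1 : energy κ w θ = energy κ θ w := energy_symm hκ w θ
    rw [show ee κ w θ = (energy κ w θ).toReal from rfl,
      show ee κ θ θ = (energy κ θ θ).toReal from rfl, e1] at hre
    exact (ENNReal.toReal_eq_toReal_iff' (energy_cross_ne_top hpd hθE hw) hθE.2.ne).mp hre
  exact ⟨θ, ⟨hθE, hθC⟩, fun lam hlam => hdist ▸ hdle lam hlam, hvar', heq⟩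

lemma exists_prob_of_capC_ne_zero {K : Set X} (hc : capC κ K ≠ 0) :
    ∃ lam : Measure X, IsProbabilityMeasure lam ∧ lam Kᶜ = 0 ∧ energy κ lam lam ≠ ⊤ := by
  have hinf : (⨅ (μ : Measure X) (_ : IsProbabilityMeasure μ) (_ : μ Kᶜ = 0),
      energy κ μ μ) < ⊤ := by
    rw [lt_top_iff_ne_top]
    intro h
    exact hc (by rw [capC, h, ENNReal.inv_top])
  simp only [iInf_lt_iff] at hinf
  obtain ⟨lam, hp, hl, hE⟩ := hinf
  exact ⟨lam, hp, hl, hE.ne⟩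

/-- Approximation of a measure of `E'(A)` by measures carried by compact subsets of `A`. -/
lemma exists_compact_approx (hκ : IsKernel κ) (hpd : StrictlyPosDef κ) {A : Set X}
    {w : Measure X} (hw : memEClos κ A w) {ε : ℝ} (hε : 0 < ε) :
    ∃ C : Set X, IsCompact C ∧ C ⊆ A ∧ ∃ lam, memEOn κ C lam ∧ sDist κ w lam < ε := by
  obtain ⟨μ, hμmem, hμd⟩ := hw.2 (ε / 2) (by positivity)
  obtain ⟨hμE, hμA⟩ := hμmem
  haveI : μ.Regular := hμE.1
  haveI := hμE.1.sigmaFinite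
  obtain ⟨N, hAN, hNm, hN0⟩ := exists_measurable_superset_of_null hμA
  set G := Nᶜ with hG
  have hGA : G ⊆ A := fun x hx => by
    by_contra hxA
    exact hx (hAN hxA)
  have hGm : MeasurableSet G := hNm.compl
  have hμG : μ Gᶜ = 0 := by
    rw [hG, compl_compl]
    exact hN0
  set nu := μ.withDensity (potential κ μ) with hnu
  haveI : IsFiniteMeasure nu := by
    constructor
    rw [hnu, withDensity_apply _ MeasurableSet.univ, Measure.restrict_univ]
    exact hμE.2
  have hη : ENNReal.ofReal ((ε / 2) ^ 2) ≠ 0 := by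
    simp only [ne_eq, ENNReal.ofReal_eq_zero, not_le]
    positivity
  obtain ⟨C, hCsub, hCcomp, hCmeas⟩ :=
    hGm.exists_isCompact_lt_add (measure_ne_top nu G) hη
  have hCm : MeasurableSet C := hCcomp.isClosed.measurableSet
  have hrE : FiniteEnergy κ (μ.restrict C) := (energy_restrict_le _ _).trans_lt hμE.2
  have hrR : IsRadon (μ.restrict C) :=
    MeasureTheory.Measure.Regular.restrict_of_measure_ne_top hCcomp.measure_lt_top.ne
  have hrmem : memEOn κ C (μ.restrict C) := by
    refine ⟨⟨hrR, hrE⟩, ?_⟩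
    rw [Measure.restrict_apply hCm.compl, Set.compl_inter_self]
    exact measure_empty
  refine ⟨C, hCcomp, hCsub.trans hGA, μ.restrict C, hrmem, ?_⟩
  -- energy of the remainder is small
  have hrem : energy κ (μ.restrict Cᶜ) (μ.restrict Cᶜ) < ENNReal.ofReal ((ε / 2) ^ 2) := by
    have h1 : energy κ (μ.restrict Cᶜ) (μ.restrict Cᶜ) ≤ nu Cᶜ := by
      have : energy κ (μ.restrict Cᶜ) (μ.restrict Cᶜ)
          = ∫⁻ x, potential κ (μ.restrict Cᶜ) x ∂(μ.restrict Cᶜ) := rfl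
      rw [this, hnu, withDensity_apply _ hCm.compl]
      exact lintegral_mono fun x => potential_mono Measure.restrict_le_self x
    have h2 : nu Cᶜ ≤ nu (G \ C) + nu Gᶜ := by
      refine (measure_mono ?_).trans (measure_union_le _ _)
      intro x hx
      by_cases hxG : x ∈ G
      · exact Or.inl ⟨hxG, hx⟩
      · exact Or.inr hxG
    have h3 : nu Gᶜ = 0 := by
      rw [hnu, withDensity_apply _ hGm.compl]
      exact setLIntegral_measure_zero _ _ hμG
    have h4 : nu (G \ C) < ENNReal.ofReal ((ε / 2) ^ 2) := by
      rw [measure_diff hCsub hCm.nullMeasurableSet (measure_ne_top nu C)]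
      exact ENNReal.sub_lt_of_lt_add (measure_mono hCsub) (by rwa [add_comm] at hCmeas)
    calc energy κ (μ.restrict Cᶜ) (μ.restrict Cᶜ) ≤ nu Cᶜ := h1
    _ ≤ nu (G \ C) + nu Gᶜ := h2
    _ = nu (G \ C) := by rw [h3, add_zero]
    _ < _ := h4
  have hdist2 : sDist κ μ (μ.restrict C) < ε / 2 := by
    rw [sDist_eq_sqrt_qq, qq_restrict_eq hκ hμE.2.ne hCm]
    rw [Real.sqrt_lt' (by positivity : (0:ℝ) < ε / 2)]
    have := ENNReal.toReal_lt_toReal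
      ((hrem.trans ENNReal.ofReal_lt_top).ne) ENNReal.ofReal_ne_top |>.mpr hrem
    rwa [ENNReal.toReal_ofReal (by positivity : (0:ℝ) ≤ (ε / 2) ^ 2)] at this
  calc sDist κ w (μ.restrict C) ≤ sDist κ w μ + sDist κ μ (μ.restrict C) :=
        sDist_triangle hκ hpd hw.1 hμE ⟨hrR, hrE⟩
  _ < ε / 2 + ε / 2 := add_lt_add hμd hdist2
  _ = ε := by ring

/-- The potential of the projection of `ωA` onto a compact subset of `A` is dominated
by the potential of any measure of the class `Γ`. -/
lemma projection_potential_le (hκ : IsKernel κ) (hpd : StrictlyPosDef κ) (hdom : Domination κ)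
    {A : Set X} {wA ν : Measure X} (hwAE : memE κ wA) (hνR : IsRadon ν) [SFinite ν]
    (hMcap : innerCap κ (A ∩ {x | ¬ potential κ wA x ≤ potential κ ν x}) = 0)
    {C : Set X} (hC : IsCompact C) (hCA : C ⊆ A)
    {θ : Measure X} (hθmem : memEOn κ C θ)
    (hθvar : ∀ σ, memEOn κ C σ → energy κ σ wA ≤ energy κ σ θ)
    (hθeq : energy κ θ wA = energy κ θ θ) :
    ∀ x, potential κ θ x ≤ potential κ ν x := by
  obtain ⟨hθE, hθC⟩ := hθmem
  haveI := hwAE.1.sigmaFinite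
  haveI := hθE.1.sigmaFinite
  -- Step 1: U^θ ≥ U^{wA} n.e. on C
  have hneg : innerCap κ (C ∩ {x | ¬ potential κ wA x ≤ potential κ θ x}) = 0 := by
    rw [innerCap_eq_zero_iff]
    intro K hK hKsub
    by_contra hc
    obtain ⟨lam, hp, hl, hE⟩ := exists_prob_of_capC_ne_zero hc
    haveI := hp
    have hlamE : memE κ lam := ⟨isRadon_of_finiteOnCompacts lam, hE.lt_top⟩
    have hlamC : memEOn κ C lam := by
      refine ⟨hlamE, le_antisymm ?_ (zero_le)⟩
      rw [← hl]
      exact measure_mono (compl_subset_compl.mpr fun x hx => (hKsub hx).1)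
    have hvar := hθvar lam hlamC
    have hstrict : energy κ lam θ < energy κ lam wA := by
      have hae : ∀ᵐ x ∂lam, x ∈ K := by
        rw [ae_iff]
        exact hl
      refine lintegral_strict_mono ?_ (measurable_potential hκ wA).aemeasurable
        (energy_cross_ne_top hpd hlamE hθE) ?_
      · exact IsProbabilityMeasure.ne_zero lam
      · filter_upwards [hae] with x hx
        exact not_le.mp (hKsub hx).2
    exact absurd hvar (not_le.mpr hstrict)
  -- Step 2: θ-a.e., U^{wA} ≤ U^θ
  have haeC : ∀ᵐ x ∂θ, potential κ wA x ≤ potential κ θ x := by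
    rw [ae_iff]
    exact measure_zero_of_innerCap_zero hκ (measurableSet_pot_not_le hκ wA θ)
      hθE.1 hθE.2 hθC hneg
  -- Step 3: equal integrals force θ-a.e. equality, in particular U^θ ≤ U^{wA} θ-a.e.
  have haerev : ∀ᵐ x ∂θ, potential κ θ x ≤ potential κ wA x := by
    have hfin : ∫⁻ x, potential κ wA x ∂θ ≠ ⊤ := energy_cross_ne_top hpd hθE hwAE
    have hsub : ∫⁻ x, (potential κ θ x - potential κ wA x) ∂θ = 0 := by
      rw [lintegral_sub (measurable_potential hκ wA) hfin haeC]
      have : ∫⁻ x, potential κ θ x ∂θ = ∫⁻ x, potential κ wA x ∂θ := hθeq.symm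
      rw [this, tsub_self]
    rw [lintegral_eq_zero_iff (show Measurable fun x => potential κ θ x - potential κ wA x from
      (measurable_potential hκ θ).sub (measurable_potential hκ wA))] at hsub
    filter_upwards [hsub] with x hx
    exact tsub_eq_zero_iff_le.mp hx
  -- Step 4: θ-a.e., U^{wA} ≤ U^ν
  have haeν : ∀ᵐ x ∂θ, potential κ wA x ≤ potential κ ν x := by
    rw [ae_iff]
    refine measure_zero_of_innerCap_zero hκ (measurableSet_pot_not_le hκ wA ν)
      hθE.1 hθE.2 ?_ hMcap
    exact le_antisymm ((measure_mono (compl_subset_compl.mpr hCA)).trans hθC.le) (zero_le)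
  -- Step 5: domination principle
  refine hdom θ ν hθE hνR ?_
  filter_upwards [haerev, haeν] with x h1 h2
  exact h1.trans h2

lemma sDist_symm (hκ : IsKernel κ) {μ ν : Measure X} (hμ : memE κ μ) (hν : memE κ ν) :
    sDist κ μ ν = sDist κ ν μ := by
  rw [sDist_eq_sqrt_qq, sDist_eq_sqrt_qq, qq, qq, ee_symm hκ hμ hν]
  ring_nf

end Aux
/-- `ω^A` belongs to `Γ_{A,ω}` and is the unique measure in `Γ_{A,ω}`
whose potential is pointwise minimal over `Γ_{A,ω}`. -/
theorem inner_balayage_min_potential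
    {X : Type*} [TopologicalSpace X] [T2Space X] [LocallyCompactSpace X]
    [SecondCountableTopology X] [MeasurableSpace X] [BorelSpace X]
    (κ : X → X → ℝ≥0∞) (hκ : IsKernel κ) (hR1 : R1 κ) (hR2 : R2 κ) (hR3 : R3 κ)
    (A : Set X) (hA : A ≠ Set.univ) (hcap : 0 < innerCap κ A)
    (ω : Measure X) (hωR : IsRadon ω) (hω0 : ω ≠ 0)
    (hfin : FiniteEnergy κ ω ∨ (ω A = 0 ∧ ω Set.univ < ⊤))
    (ωA : Measure X) (hωA : IsInnerBalayage κ A ω ωA) :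
    memGamma κ A ω ωA ∧
    (∀ ν : Measure X, memGamma κ A ω ν → ∀ x : X, potential κ ωA x ≤ potential κ ν x) ∧
    (∀ μ : Measure X, memGamma κ A ω μ →
      (∀ ν : Measure X, memGamma κ A ω ν → ∀ x : X, potential κ μ x ≤ potential κ ν x) →
      μ = ωA) := by
  obtain ⟨hωAclos, hωAcap⟩ := hωA
  have hωAE : memE κ ωA := hωAclos.1
  have hpd : StrictlyPosDef κ := hR1.perfect.posdef
  haveI := hωAE.1.sigmaFinite
  haveI := hωR.sigmaFinite
  -- Part 1 : ωA ∈ Γ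
  have hpart1 : memGamma κ A ω ωA := by
    refine ⟨hωAE, ?_⟩
    refine le_antisymm (le_trans (innerCap_mono ?_) (le_of_eq hωAcap)) (zero_le)
    rintro x ⟨hxA, hx⟩
    exact ⟨hxA, fun heq => hx (le_of_eq heq.symm)⟩
  -- Part 2 : minimality of the potential
  have hpart2 : ∀ ν : Measure X, memGamma κ A ω ν →
      ∀ x : X, potential κ ωA x ≤ potential κ ν x := by
    intro ν hν x
    obtain ⟨hνE, hνcap⟩ := hν
    haveI := hνE.1.sigmaFinite
    have hMcap : innerCap κ (A ∩ {y | ¬ potential κ ωA y ≤ potential κ ν y}) = 0 := by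
      have e1 : innerCap κ (A ∩ {y | potential κ ωA y ≠ potential κ ω y}) = 0 := by
        rw [show A ∩ {y | potential κ ωA y ≠ potential κ ω y}
          = {y ∈ A | potential κ ωA y ≠ potential κ ω y} from rfl]
        exact hωAcap
      have e2 : innerCap κ (A ∩ {y | ¬ potential κ ω y ≤ potential κ ν y}) = 0 := by
        rw [show A ∩ {y | ¬ potential κ ω y ≤ potential κ ν y}
          = {y ∈ A | ¬ potential κ ω y ≤ potential κ ν y} from rfl]
        exact hνcap
      have hunion := innerCap_inter_union_zero hκ (measurableSet_pot_ne hκ ωA ω)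
        (measurableSet_pot_not_le hκ ω ν) e1 e2
      refine le_antisymm (le_trans (innerCap_mono ?_) (le_of_eq hunion)) (zero_le)
      rintro y ⟨hyA, hy⟩
      refine ⟨hyA, ?_⟩
      by_cases h1 : potential κ ωA y = potential κ ω y
      · exact Or.inr fun h2 => hy (h1.le.trans h2)
      · exact Or.inl h1
    -- approximation by projections onto compact subsets of A
    have happrox : ∀ m : ℕ, ∃ C : Set X, IsCompact C ∧ C ⊆ A ∧
        ∃ lam, memEOn κ C lam ∧ sDist κ ωA lam < 1 / (m + 1) := fun m =>
      exists_compact_approx hκ hpd hωAclos (by positivity)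
    choose Cs hCcomp hCA lams hlammem hlamd using happrox
    have hproj := fun m => exists_projection hκ hR1.perfect hωAE (hCcomp m)
    choose θs hθmem hθmin hθvar hθeq using hproj
    have hθdist : ∀ m : ℕ, sDist κ ωA (θs m) < 1 / (m + 1) := fun m =>
      lt_of_le_of_lt (hθmin m (lams m) (hlammem m)) (hlamd m)
    have htend : Tendsto (fun m => sDist κ (θs m) ωA) atTop (nhds 0) := by
      refine squeeze_zero (fun m => sDist_nonneg' _ _) (fun m => ?_)
        tendsto_one_div_add_atTop_nhds_zero_nat
      rw [sDist_symm hκ (hθmem m).1 hωAE]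
      exact (hθdist m).le
    have hvague : VagueTendsto θs ωA :=
      hR1.perfect.finerThanVague θs ωA (fun m => (hθmem m).1) hωAE htend
    have hlsc : LowerSemicontinuous fun y => κ x y :=
      hκ.lsc.comp (Continuous.prodMk_right x)
    have hliminf := lintegral_le_liminf_of_vague (fun m => (hθmem m).1.1) hωAE.1 hvague hlsc
    have hbound : ∀ m : ℕ, potential κ (θs m) x ≤ potential κ ν x := fun m =>
      projection_potential_le hκ hpd hR1.domination hωAE hνE.1 hMcap (hCcomp m) (hCA m)
        (hθmem m) (hθvar m) (hθeq m) x
    calc potential κ ωA x ≤ atTop.liminf fun m => ∫⁻ y, κ x y ∂(θs m) := hliminf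
    _ ≤ atTop.liminf fun _ => potential κ ν x :=
        liminf_le_liminf (Eventually.of_forall hbound)
    _ = potential κ ν x := liminf_const _
  refine ⟨hpart1, hpart2, ?_⟩
  -- Part 3 : uniqueness
  intro μ hμ hmin
  have h1 : ∀ x, potential κ μ x ≤ potential κ ωA x := hmin ωA hpart1
  have h2 : ∀ x, potential κ ωA x ≤ potential κ μ x := hpart2 μ hμ
  have heqp : ∀ x, potential κ μ x = potential κ ωA x := fun x => le_antisymm (h1 x) (h2 x)
  have hμE := hμ.1
  haveI := hμE.1.sigmaFinite
  have e1 : energy κ μ ωA = energy κ μ μ := lintegral_congr fun x => (heqp x).symm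
  have e2 : energy κ ωA μ = energy κ ωA ωA := lintegral_congr fun x => heqp x
  have e3 : energy κ μ ωA = energy κ ωA μ := energy_symm hκ μ ωA
  refine (hpd μ ωA hμE.1 hωAE.1 hμE.2 hωAE.2).2 ?_
  calc 2 * energy κ μ ωA = energy κ μ ωA + energy κ μ ωA := two_mul _
  _ = energy κ μ μ + energy κ ωA ωA := by nth_rewrite 2 [e3]; rw [e2, e1]


end Balayage
end

section
/- Let X be a locally compact Hausdorff space and κ a strictly positive definite kernel on X. For any A ⊂ X, the following are equivalent: (i) E'(A) = {0}; (ii) E⁺(A) = {0}; (iii) the inner capacity of A is zero, cp_*A = 0. -/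
open MeasureTheory Filter Set Topology ENNReal CompactlySupported UniformConvergence

namespace Balayage
open scoped Classical

variable {X : Type*} [TopologicalSpace X] [MeasurableSpace X]

/-! ### Auxiliary lemmas -/

section Aux
open scoped NNReal

variable {Y : Type*} [TopologicalSpace Y] [MeasurableSpace Y] [BorelSpace Y]

lemma lsc_left {κ : Y → Y → ℝ≥0∞} (hκ : LowerSemicontinuous fun p : Y × Y => κ p.1 p.2)
    (x : Y) : LowerSemicontinuous fun y => κ x y := by
  rw [lowerSemicontinuous_iff_isOpen_preimage] at hκ ⊢
  intro t
  have : (fun y => κ x y) ⁻¹' Ioi t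
      = (fun y : Y => (x, y)) ⁻¹' ((fun p : Y × Y => κ p.1 p.2) ⁻¹' Ioi t) := rfl
  rw [this]
  exact (hκ t).preimage (continuous_const.prodMk continuous_id)

/-- If `ρ ≤ τ` on open sets, then lower Lebesgue integrals of lower semicontinuous
functions are compared. -/
lemma lintegral_le_lintegral_of_isOpen_le {ρ τ : Measure Y}
    (h : ∀ U : Set Y, IsOpen U → ρ U ≤ τ U) {g : Y → ℝ≥0∞}
    (hg : LowerSemicontinuous g) : ∫⁻ x, g x ∂ρ ≤ ∫⁻ x, g x ∂τ := by
  have hgm : Measurable g := hg.measurable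
  have hsup : ∀ x : Y, ⨆ n : ℕ, min (g x) n = g x := by
    intro x
    refine le_antisymm (iSup_le fun n => min_le_left _ _) ?_
    rcases eq_top_or_lt_top (g x) with hx | hx
    · calc g x = ⨆ n : ℕ, (n : ℝ≥0∞) := by rw [ENNReal.iSup_natCast, hx]
        _ ≤ ⨆ n : ℕ, min (g x) n :=
          iSup_mono fun n => by rw [hx]; exact (min_eq_right le_top).ge
    · obtain ⟨n, hn⟩ := ENNReal.exists_nat_gt hx.ne
      exact le_trans (min_eq_left hn.le).ge (le_iSup (fun n : ℕ => min (g x) n) n)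
  have hmono : Monotone fun (n : ℕ) (x : Y) => min (g x) n := fun a b hab x =>
    min_le_min le_rfl (by exact_mod_cast hab)
  have hrep : ∫⁻ x, g x ∂ρ = ⨆ n : ℕ, ∫⁻ x, min (g x) n ∂ρ := by
    rw [← lintegral_iSup (fun n => hgm.min measurable_const) hmono]
    exact lintegral_congr fun x => (hsup x).symm
  rw [hrep]
  refine iSup_le fun n => ?_
  set f : Y → ℝ := fun x => (min (g x) n).toReal with hf
  have hne : ∀ x, min (g x) (n : ℝ≥0∞) ≠ ⊤ := fun x =>
    ((min_le_right _ _).trans_lt (ENNReal.natCast_lt_top n)).ne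
  have hofReal : ∀ x, ENNReal.ofReal (f x) = min (g x) n := fun x =>
    ENNReal.ofReal_toReal (hne x)
  have hfm : Measurable f := (hgm.min measurable_const).ennreal_toReal
  have hnn : ∀ x, 0 ≤ f x := fun x => ENNReal.toReal_nonneg
  have hopen : ∀ t : ℝ, IsOpen {a : Y | t < f a} := by
    intro t
    rcases lt_or_ge t 0 with ht | ht
    · have : {a : Y | t < f a} = univ := eq_univ_of_forall fun a => ht.trans_le (hnn a)
      rw [this]; exact isOpen_univ
    · by_cases htn : ENNReal.ofReal t < (n : ℝ≥0∞)
      · have : {a : Y | t < f a} = g ⁻¹' Ioi (ENNReal.ofReal t) := by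
          ext a
          simp only [mem_setOf_eq, mem_preimage, mem_Ioi, hf]
          rw [← ENNReal.ofReal_lt_iff_lt_toReal ht (hne a), lt_min_iff]
          exact ⟨fun h' => h'.1, fun h' => ⟨h', htn⟩⟩
        rw [this]
        exact hg.isOpen_preimage _
      · have : {a : Y | t < f a} = ∅ := by
          ext a
          simp only [mem_setOf_eq, mem_empty_iff_false, iff_false, not_lt, hf]
          have h1 : (min (g a) (n : ℝ≥0∞)).toReal ≤ ((n : ℝ≥0∞)).toReal :=
            ENNReal.toReal_mono (ENNReal.natCast_ne_top n) (min_le_right _ _)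
          have h2 : ((n : ℝ≥0∞)).toReal ≤ t := by
            rw [ENNReal.toReal_natCast]
            rw [not_lt, ← ENNReal.ofReal_natCast] at htn
            exact (ENNReal.ofReal_le_ofReal_iff ht).1 htn
          exact h1.trans h2
        rw [this]; exact isOpen_empty
  calc ∫⁻ x, min (g x) n ∂ρ
      = ∫⁻ x, ENNReal.ofReal (f x) ∂ρ := lintegral_congr fun x => (hofReal x).symm
    _ = ∫⁻ t in Ioi (0 : ℝ), ρ {a | t < f a} :=
        lintegral_eq_lintegral_meas_lt ρ (Eventually.of_forall hnn) hfm.aemeasurable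
    _ ≤ ∫⁻ t in Ioi (0 : ℝ), τ {a | t < f a} := lintegral_mono fun t => h _ (hopen t)
    _ = ∫⁻ x, ENNReal.ofReal (f x) ∂τ :=
        (lintegral_eq_lintegral_meas_lt τ (Eventually.of_forall hnn) hfm.aemeasurable).symm
    _ = ∫⁻ x, min (g x) n ∂τ := lintegral_congr hofReal
    _ ≤ ∫⁻ x, g x ∂τ := lintegral_mono fun x => min_le_left _ _

/-- The potential of a finite regular measure with respect to a lower semicontinuous kernel
is lower semicontinuous. -/
lemma lowerSemicontinuous_potential_aux [T2Space Y] {κ : Y → Y → ℝ≥0∞}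
    (hκ : LowerSemicontinuous fun p : Y × Y => κ p.1 p.2) (μ' : Measure Y)
    [μ'.Regular] [IsFiniteMeasure μ'] :
    LowerSemicontinuous fun x => ∫⁻ y, κ x y ∂μ' := by
  intro x₀ c hc
  change c < ∫⁻ y, κ x₀ y ∂μ' at hc
  rw [lintegral_eq_nnreal] at hc
  rw [lt_iSup_iff] at hc
  obtain ⟨φ, hc⟩ := hc
  rw [lt_iSup_iff] at hc
  obtain ⟨hφ, hc⟩ := hc
  rw [SimpleFunc.map_lintegral] at hc
  set S : Finset ℝ≥0 := φ.range.filter (fun v => v ≠ 0) with hS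
  have hsum : ∑ v ∈ S, (v : ℝ≥0∞) * μ' (⇑φ ⁻¹' {v})
      = ∑ v ∈ φ.range, (v : ℝ≥0∞) * μ' (⇑φ ⁻¹' {v}) :=
    Finset.sum_filter_of_ne fun v _ hne h0 => hne (by rw [h0, ENNReal.coe_zero, zero_mul])
  rw [← hsum] at hc
  set T := ∑ v ∈ S, (v : ℝ≥0∞) * μ' (⇑φ ⁻¹' {v}) with hT
  have hTtop : T ≠ ⊤ :=
    (ENNReal.sum_lt_top.mpr fun v _ =>
      ENNReal.mul_lt_top ENNReal.coe_lt_top (measure_lt_top μ' _)).ne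
  obtain ⟨c', hcc', hc'T⟩ := exists_between hc
  have hScard : (S.card : ℝ≥0∞) ≠ 0 := by
    intro h0
    have : S = ∅ := Finset.card_eq_zero.1 (by exact_mod_cast h0)
    rw [this] at hT
    simp only [Finset.sum_empty] at hT
    rw [hT] at hc'T
    exact (ENNReal.not_lt_zero (hcc'.trans hc'T)).elim
  have hεne : (T - c') / (S.card : ℝ≥0∞) ≠ 0 := by
    refine ENNReal.div_ne_zero.2 ⟨?_, ?_⟩
    · exact (tsub_pos_of_lt hc'T).ne'
    · exact ENNReal.natCast_ne_top _
  have hCex : ∀ v : ℝ≥0, ∃ C : Set Y, IsCompact C ∧ C ⊆ ⇑φ ⁻¹' {v} ∧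
      ((v : ℝ≥0∞) * μ' (⇑φ ⁻¹' {v})
        ≤ (v : ℝ≥0∞) * μ' C + (T - c') / (S.card : ℝ≥0∞)) := by
    intro v
    by_cases hv : v = 0
    · exact ⟨∅, isCompact_empty, empty_subset _, by simp [hv]⟩
    · have hmeas := φ.measurableSet_fiber v
      have hfin : μ' (⇑φ ⁻¹' {v}) ≠ ⊤ := measure_ne_top μ' _
      have hεv : ((T - c') / (S.card : ℝ≥0∞)) / (v : ℝ≥0∞) ≠ 0 :=
        ENNReal.div_ne_zero.2 ⟨hεne, ENNReal.coe_ne_top⟩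
      obtain ⟨C, hCs, hCc, hlt⟩ := hmeas.exists_isCompact_lt_add hfin hεv
      refine ⟨C, hCc, hCs, ?_⟩
      calc (v : ℝ≥0∞) * μ' (⇑φ ⁻¹' {v})
          ≤ (v : ℝ≥0∞) * (μ' C + ((T - c') / (S.card : ℝ≥0∞)) / (v : ℝ≥0∞)) :=
            mul_le_mul_right hlt.le _
        _ = (v : ℝ≥0∞) * μ' C + (v : ℝ≥0∞) * (((T - c') / (S.card : ℝ≥0∞)) / (v : ℝ≥0∞)) :=
            mul_add _ _ _
        _ ≤ (v : ℝ≥0∞) * μ' C + (T - c') / (S.card : ℝ≥0∞) :=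
            add_le_add_right ENNReal.mul_div_le _
  choose C hCcomp hCsub hCle using hCex
  set T' := ∑ v ∈ S, (v : ℝ≥0∞) * μ' (C v) with hT'
  have hT'leT : T' ≤ T :=
    Finset.sum_le_sum fun v _ => mul_le_mul_right (measure_mono (hCsub v)) _
  have hTle : T ≤ T' + (T - c') := by
    calc T ≤ ∑ v ∈ S, ((v : ℝ≥0∞) * μ' (C v) + (T - c') / (S.card : ℝ≥0∞)) :=
          Finset.sum_le_sum fun v hv => hCle v
      _ = T' + S.card * ((T - c') / (S.card : ℝ≥0∞)) := by
          rw [Finset.sum_add_distrib, Finset.sum_const, nsmul_eq_mul]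
      _ ≤ T' + (T - c') := add_le_add_right ENNReal.mul_div_le _
  have hsubne : T - c' ≠ ⊤ := (tsub_le_self.trans_lt hTtop.lt_top).ne
  have hc'T' : c' ≤ T' := by
    have h1 : c' + (T - c') = T := add_tsub_cancel_of_le hc'T.le
    have h2 : c' + (T - c') ≤ T' + (T - c') := by rw [h1]; exact hTle
    exact (ENNReal.add_le_add_iff_right hsubne).1 h2
  obtain ⟨c'', hcc'', hc''c'⟩ := exists_between hcc'
  have hT'0 : T' ≠ 0 := by
    intro h0
    rw [h0] at hc'T'
    exact (ENNReal.not_lt_zero ((le_zero_iff.1 hc'T') ▸ hcc''.trans hc''c')).elim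
  have hT'top : T' ≠ ⊤ := (hT'leT.trans_lt hTtop.lt_top).ne
  set θ := c'' / T' with hθ
  have hθT' : θ * T' = c'' := ENNReal.div_mul_cancel hT'0 hT'top
  have hθ1 : θ < 1 := by
    rw [hθ, ENNReal.div_lt_iff (Or.inl hT'0) (Or.inl hT'top), one_mul]
    exact hc''c'.trans_le hc'T'
  have hθlt : ∀ v : ℝ≥0, v ≠ 0 → θ * v < v := by
    intro v hv
    have := ENNReal.mul_lt_mul_left (a := (v : ℝ≥0∞)) (by exact_mod_cast hv)
      ENNReal.coe_ne_top hθ1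
    rwa [one_mul] at this
  have hUex : ∀ v : ℝ≥0, ∃ u : Set Y, IsOpen u ∧ x₀ ∈ u ∧
      (v ∈ S → ∀ x ∈ u, ∀ y ∈ C v, θ * v < κ x y) := by
    intro v
    by_cases hv : v ∈ S
    · have hWopen : IsOpen {p : Y × Y | θ * v < κ p.1 p.2} := hκ.isOpen_preimage _
      have hsub : {x₀} ×ˢ C v ⊆ {p : Y × Y | θ * v < κ p.1 p.2} := by
        rintro ⟨x, y⟩ ⟨hx, hy⟩
        simp only [mem_singleton_iff] at hx
        have hv0 : v ≠ 0 := (Finset.mem_filter.1 hv).2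
        have hφy : φ y = v := by simpa using hCsub v hy
        have hle : (v : ℝ≥0∞) ≤ κ x y := by rw [hx]; exact hφy ▸ hφ y
        exact (hθlt v hv0).trans_le hle
      obtain ⟨u, w, hu, hw, hxu, hCw, huw⟩ :=
        generalized_tube_lemma isCompact_singleton (hCcomp v) hWopen hsub
      refine ⟨u, hu, hxu rfl, fun _ x hx y hy => ?_⟩
      have hmem : (x, y) ∈ {p : Y × Y | θ * v < κ p.1 p.2} := huw ⟨hx, hCw hy⟩
      exact hmem
    · exact ⟨univ, isOpen_univ, mem_univ _, fun h => absurd h hv⟩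
  choose U hUopen hUx hUlt using hUex
  have hVopen : IsOpen (⋂ v ∈ S, U v) := isOpen_biInter_finset fun v _ => hUopen v
  have hVmem : x₀ ∈ ⋂ v ∈ S, U v := mem_iInter₂.2 fun v _ => hUx v
  refine Filter.eventually_of_mem (hVopen.mem_nhds hVmem) fun x hx => ?_
  have hbound : ∑ v ∈ S, (θ * v) * μ' (C v) ≤ ∫⁻ y, κ x y ∂μ' := by
    have heq : ∀ v ∈ S, (θ * (v : ℝ≥0∞)) * μ' (C v)
        = ∫⁻ y, (C v).indicator (fun _ => θ * (v : ℝ≥0∞)) y ∂μ' := fun v hv =>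
      (lintegral_indicator_const ((hCcomp v).isClosed.measurableSet) _).symm
    rw [Finset.sum_congr rfl heq, ← lintegral_finset_sum _
      (fun v hv => measurable_const.indicator ((hCcomp v).isClosed.measurableSet))]
    refine lintegral_mono fun y => ?_
    by_cases hy : ∃ v ∈ S, y ∈ C v
    · obtain ⟨v₀, hv₀S, hyv₀⟩ := hy
      rw [Finset.sum_eq_single v₀]
      · rw [indicator_of_mem hyv₀]
        exact (hUlt v₀ hv₀S x (mem_iInter₂.1 hx v₀ hv₀S) y hyv₀).le
      · intro v hvS hvne
        refine indicator_of_notMem (fun hyv => hvne ?_) _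
        have h1 : φ y = v := by simpa using hCsub v hyv
        have h2 : φ y = v₀ := by simpa using hCsub v₀ hyv₀
        rw [← h1, h2]
      · intro h; exact absurd hv₀S h
    · push_neg at hy
      rw [Finset.sum_eq_zero fun v hv => indicator_of_notMem (hy v hv) _]
      exact zero_le
  have hfin : c < ∑ v ∈ S, (θ * (v : ℝ≥0∞)) * μ' (C v) := by
    have hcongr : ∑ v ∈ S, (θ * (v : ℝ≥0∞)) * μ' (C v) = θ * T' := by
      rw [hT', Finset.mul_sum]
      exact Finset.sum_congr rfl fun v _ => mul_assoc _ _ _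
    rw [hcongr, hθT']
    exact hcc''
  exact hfin.trans_le hbound

end Aux

section Regularization

variable {Y : Type*} [TopologicalSpace Y] [MeasurableSpace Y] [BorelSpace Y]
  [T2Space Y] [LocallyCompactSpace Y]

/-- The Riesz-type functional used to regularize a measure. -/
noncomputable def lamAux (τ : Measure Y) (K : Set Y) : ℝ≥0∞ :=
  ⨅ (f : C(Y, ℝ)) (_ : ∀ x ∈ K, 1 ≤ f x) (_ : ∀ x, 0 ≤ f x),
    ∫⁻ x, ENNReal.ofReal (f x) ∂τ

lemma lamAux_le {τ : Measure Y} {K : Set Y} {f : C(Y, ℝ)} (h1 : ∀ x ∈ K, 1 ≤ f x)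
    (h0 : ∀ x, 0 ≤ f x) : lamAux τ K ≤ ∫⁻ x, ENNReal.ofReal (f x) ∂τ :=
  iInf_le_of_le f (iInf_le_of_le h1 (iInf_le _ h0))

lemma lamAux_le_one (τ : Measure Y) [IsProbabilityMeasure τ] (K : Set Y) :
    lamAux τ K ≤ 1 := by
  refine le_trans (lamAux_le (f := 1) (fun x _ => le_of_eq rfl) (fun x => zero_le_one)) ?_
  simp [ENNReal.ofReal_one]

lemma lamAux_ne_top (τ : Measure Y) [IsProbabilityMeasure τ] (K : Set Y) :
    lamAux τ K ≠ ⊤ :=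
  ((lamAux_le_one τ K).trans_lt ENNReal.one_lt_top).ne

lemma lamAux_mono (τ : Measure Y) {K₁ K₂ : Set Y} (h : K₁ ⊆ K₂) :
    lamAux τ K₁ ≤ lamAux τ K₂ :=
  le_iInf fun f => le_iInf fun h1 => le_iInf fun h0 =>
    lamAux_le (fun x hx => h1 x (h hx)) h0

lemma lamAux_union_le (τ : Measure Y) (K₁ K₂ : Set Y) :
    lamAux τ (K₁ ∪ K₂) ≤ lamAux τ K₁ + lamAux τ K₂ := by
  conv_rhs => rw [lamAux, lamAux]
  rw [ENNReal.iInf_add]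
  refine le_iInf fun f₁ => ?_
  rw [ENNReal.iInf_add]
  refine le_iInf fun h11 => ?_
  rw [ENNReal.iInf_add]
  refine le_iInf fun h10 => ?_
  rw [ENNReal.add_iInf]
  refine le_iInf fun f₂ => ?_
  rw [ENNReal.add_iInf]
  refine le_iInf fun h21 => ?_
  rw [ENNReal.add_iInf]
  refine le_iInf fun h20 => ?_
  refine le_trans (lamAux_le (f := f₁ + f₂) ?_ ?_) ?_
  · intro x hx
    rcases hx with hx | hx
    · simpa using le_add_of_le_of_nonneg (h11 x hx) (h20 x)
    · simpa using le_add_of_nonneg_of_le (h10 x) (h21 x hx)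
  · intro x
    simpa using add_nonneg (h10 x) (h20 x)
  · have hpt : ∀ x, ENNReal.ofReal ((f₁ + f₂) x)
        = ENNReal.ofReal (f₁ x) + ENNReal.ofReal (f₂ x) := fun x => by
      rw [ContinuousMap.add_apply, ENNReal.ofReal_add (h10 x) (h20 x)]
    rw [lintegral_congr hpt,
      lintegral_add_left (f₁.continuous.measurable.ennreal_ofReal)]

lemma lamAux_add_le_union (τ : Measure Y) {K₁ K₂ : Set Y} (h₁ : IsCompact K₁)
    (h₂ : IsClosed K₂) (hd : Disjoint K₁ K₂) :
    lamAux τ K₁ + lamAux τ K₂ ≤ lamAux τ (K₁ ∪ K₂) := by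
  refine le_iInf fun f => le_iInf fun h1 => le_iInf fun h0 => ?_
  obtain ⟨g, hg0, hg1, hgi⟩ := exists_continuous_zero_one_of_isCompact' h₁ h₂ hd
  have hg0' : ∀ x, 0 ≤ g x := fun x => (hgi x).1
  have hg1' : ∀ x, g x ≤ 1 := fun x => (hgi x).2
  have hA : lamAux τ K₁ ≤ ∫⁻ x, ENNReal.ofReal ((f * g) x) ∂τ := by
    refine lamAux_le (fun x hx => ?_) (fun x => ?_)
    · have := hg1 hx
      simp only [ContinuousMap.mul_apply]
      rw [show g x = 1 from this, mul_one]
      exact h1 x (Or.inl hx)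
    · exact mul_nonneg (h0 x) (hg0' x)
  have hB : lamAux τ K₂ ≤ ∫⁻ x, ENNReal.ofReal ((f * (1 - g)) x) ∂τ := by
    refine lamAux_le (fun x hx => ?_) (fun x => ?_)
    · have := hg0 hx
      simp only [ContinuousMap.mul_apply, ContinuousMap.sub_apply, ContinuousMap.one_apply]
      rw [show g x = 0 from this, sub_zero, mul_one]
      exact h1 x (Or.inr hx)
    · simp only [ContinuousMap.mul_apply, ContinuousMap.sub_apply, ContinuousMap.one_apply]
      exact mul_nonneg (h0 x) (by linarith [hg1' x])
  refine le_trans (add_le_add hA hB) (le_of_eq ?_)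
  rw [← lintegral_add_left ((f * g).continuous.measurable.ennreal_ofReal)]
  refine lintegral_congr fun x => ?_
  simp only [ContinuousMap.mul_apply, ContinuousMap.sub_apply, ContinuousMap.one_apply]
  rw [← ENNReal.ofReal_add (mul_nonneg (h0 x) (hg0' x))
    (mul_nonneg (h0 x) (by linarith [hg1' x]))]
  ring_nf

/-- The content associated with the regularization of a probability measure. -/
noncomputable def regContent (τ : Measure Y) [IsProbabilityMeasure τ] : Content Y where
  toFun K := (lamAux τ (K : Set Y)).toNNReal
  mono' K₁ K₂ h := ENNReal.toNNReal_mono (lamAux_ne_top τ _) (lamAux_mono τ h)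
  sup_disjoint' K₁ K₂ hd h₁ h₂ := by
    have heq : lamAux τ ((K₁ ⊔ K₂ : TopologicalSpace.Compacts Y) : Set Y)
        = lamAux τ (K₁ : Set Y) + lamAux τ (K₂ : Set Y) := by
      rw [TopologicalSpace.Compacts.coe_sup]
      exact le_antisymm (lamAux_union_le τ _ _)
        (lamAux_add_le_union τ K₁.2 h₂ hd)
    show (lamAux τ ((K₁ ⊔ K₂ : TopologicalSpace.Compacts Y) : Set Y)).toNNReal
        = (lamAux τ (K₁ : Set Y)).toNNReal + (lamAux τ (K₂ : Set Y)).toNNReal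
    rw [heq, ENNReal.toNNReal_add (lamAux_ne_top τ _) (lamAux_ne_top τ _)]
  sup_le' K₁ K₂ := by
    have hle : lamAux τ ((K₁ ⊔ K₂ : TopologicalSpace.Compacts Y) : Set Y)
        ≤ lamAux τ (K₁ : Set Y) + lamAux τ (K₂ : Set Y) := by
      rw [TopologicalSpace.Compacts.coe_sup]
      exact lamAux_union_le τ _ _
    show (lamAux τ ((K₁ ⊔ K₂ : TopologicalSpace.Compacts Y) : Set Y)).toNNReal
        ≤ (lamAux τ (K₁ : Set Y)).toNNReal + (lamAux τ (K₂ : Set Y)).toNNReal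
    calc (lamAux τ ((K₁ ⊔ K₂ : TopologicalSpace.Compacts Y) : Set Y)).toNNReal
        ≤ (lamAux τ (K₁ : Set Y) + lamAux τ (K₂ : Set Y)).toNNReal :=
          ENNReal.toNNReal_mono
            (ENNReal.add_ne_top.2 ⟨lamAux_ne_top τ _, lamAux_ne_top τ _⟩) hle
      _ = _ := ENNReal.toNNReal_add (lamAux_ne_top τ _) (lamAux_ne_top τ _)


/-- Regularization of a finite-energy probability measure concentrated on a compact set:
there is a **regular** measure, still concentrated on the compact set, nonzero, with
energy bounded by the original energy. -/
lemma exists_regular_of_finite_energy {κ : Y → Y → ℝ≥0∞}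
    (hκ : LowerSemicontinuous fun p : Y × Y => κ p.1 p.2) {K : Set Y}
    (hK : IsCompact K) (τ : Measure Y) [IsProbabilityMeasure τ] (hτK : τ Kᶜ = 0) :
    ∃ μ' : Measure Y, μ'.Regular ∧ energy κ μ' μ' ≤ energy κ τ τ ∧ μ' Kᶜ = 0 ∧ μ' ≠ 0 := by
  classical
  set C := regContent τ with hC
  set μ' := C.measure with hμ'
  have hcoe : ∀ Kc : TopologicalSpace.Compacts Y, (C Kc : ℝ≥0∞) = lamAux τ (Kc : Set Y) :=
    fun Kc => ENNReal.coe_toNNReal (lamAux_ne_top τ _)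
  have hopen_eval : ∀ (U : Set Y) (hU : IsOpen U),
      μ' U = C.innerContent ⟨U, hU⟩ := fun U hU => by
    rw [hμ', C.measure_apply hU.measurableSet]
    exact C.outerMeasure_opens ⟨U, hU⟩
  have hle_open : ∀ U : Set Y, IsOpen U → μ' U ≤ τ U := by
    intro U hU
    rw [hopen_eval U hU]
    refine iSup₂_le fun Kc hKc => ?_
    rw [hcoe]
    obtain ⟨f, hf1, hf0, hfc, hfi⟩ := exists_continuous_one_zero_of_isCompact Kc.2
      hU.isClosed_compl (disjoint_compl_right_iff_subset.mpr hKc)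
    refine le_trans (lamAux_le (fun x hx => (hf1 hx).ge) (fun x => (hfi x).1)) ?_
    have hpt : ∀ x, ENNReal.ofReal (f x) ≤ U.indicator (fun _ => (1 : ℝ≥0∞)) x := by
      intro x
      by_cases hx : x ∈ U
      · rw [indicator_of_mem hx]
        exact ENNReal.ofReal_le_one.2 (hfi x).2
      · rw [indicator_of_notMem hx, hf0 hx]
        simp
    refine le_trans (lintegral_mono hpt) ?_
    rw [lintegral_indicator_const hU.measurableSet, one_mul]
  haveI : IsFiniteMeasure μ' := by
    refine ⟨lt_of_le_of_lt (hle_open univ isOpen_univ) ?_⟩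
    rw [measure_univ]
    exact ENNReal.one_lt_top
  have hpotle : ∀ x, potential κ μ' x ≤ potential κ τ x := fun x =>
    lintegral_le_lintegral_of_isOpen_le hle_open (lsc_left hκ x)
  have hpotlsc : LowerSemicontinuous fun x => potential κ μ' x :=
    lowerSemicontinuous_potential_aux hκ μ'
  have hEle : energy κ μ' μ' ≤ energy κ τ τ := by
    calc energy κ μ' μ' = ∫⁻ x, potential κ μ' x ∂μ' := rfl
      _ ≤ ∫⁻ x, potential κ μ' x ∂τ :=
          lintegral_le_lintegral_of_isOpen_le hle_open hpotlsc
      _ ≤ ∫⁻ x, potential κ τ x ∂τ := lintegral_mono hpotle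
      _ = energy κ τ τ := rfl
  have hKcomp : μ' Kᶜ = 0 := by
    rw [hopen_eval Kᶜ hK.isClosed.isOpen_compl]
    refine le_antisymm (iSup₂_le fun Kc hKc => ?_) zero_le
    rw [hcoe]
    obtain ⟨f, hf1, hf0, hfc, hfi⟩ := exists_continuous_one_zero_of_isCompact Kc.2
      hK.isClosed (Set.disjoint_left.2 fun x hx hxK => (hKc hx) hxK)
    refine le_trans (lamAux_le (fun x hx => (hf1 hx).ge) (fun x => (hfi x).1)) (le_of_eq ?_)
    rw [lintegral_eq_zero_iff (f.continuous.measurable.ennreal_ofReal)]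
    refine measure_mono_null ?_ hτK
    intro x hx
    have hfx : ENNReal.ofReal (f x) ≠ 0 := by simpa using hx
    simp only [mem_compl_iff]
    intro hxK
    have hz : f x = 0 := by simpa using hf0 hxK
    exact hfx (by rw [hz]; simp)
  have hμ'pos : (1 : ℝ≥0∞) ≤ μ' univ := by
    rw [hopen_eval univ isOpen_univ]
    have hτK1 : τ K = 1 := by
      have h2 : τ univ ≤ τ K + τ Kᶜ := by
        rw [← union_compl_self K]
        exact measure_union_le _ _
      rw [hτK, add_zero, measure_univ] at h2
      exact le_antisymm prob_le_one h2
    have h1 : (1 : ℝ≥0∞) ≤ lamAux τ K := by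
      refine le_iInf fun f => le_iInf fun h1 => le_iInf fun h0 => ?_
      calc (1 : ℝ≥0∞) = τ K := hτK1.symm
        _ = ∫⁻ x, K.indicator (fun _ => (1 : ℝ≥0∞)) x ∂τ := by
            rw [lintegral_indicator_const hK.isClosed.measurableSet, one_mul]
        _ ≤ ∫⁻ x, ENNReal.ofReal (f x) ∂τ := by
            refine lintegral_mono fun x => ?_
            by_cases hx : x ∈ K
            · rw [indicator_of_mem hx]
              exact ENNReal.one_le_ofReal.2 (h1 x hx)
            · rw [indicator_of_notMem hx]
              exact zero_le
    refine le_trans h1 ?_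
    have hmem := C.le_innerContent ⟨K, hK⟩ ⟨univ, isOpen_univ⟩ (subset_univ K)
    rwa [hcoe ⟨K, hK⟩] at hmem
  refine ⟨μ', inferInstance, hEle, hKcomp, fun h => ?_⟩
  rw [h] at hμ'pos
  simp at hμ'pos

end Regularization

/-- `E'(A) = {0} ⟺ E⁺(A) = {0} ⟺ cp_* A = 0`. -/
theorem eClos_trivial_iff_ePlus_trivial_iff_innerCap_zero
    {X : Type*} [TopologicalSpace X] [T2Space X] [LocallyCompactSpace X]
    [MeasurableSpace X] [BorelSpace X]
    (κ : X → X → ℝ≥0∞) (hκ : IsKernel κ) (hpd : StrictlyPosDef κ) (A : Set X) :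
    ((∀ μ : Measure X, memEClos κ A μ → μ = 0) ↔
      (∀ μ : Measure X, memEOn κ A μ → μ = 0)) ∧
    ((∀ μ : Measure X, memEOn κ A μ → μ = 0) ↔ innerCap κ A = 0) := by
  classical
  have hpot0 : ∀ x : X, potential κ (0 : Measure X) x = 0 := fun x =>
    lintegral_zero_measure _
  have h00 : energy κ (0 : Measure X) (0 : Measure X) = 0 := lintegral_zero_measure _
  have hμ0 : ∀ μ : Measure X, energy κ μ (0 : Measure X) = 0 := fun μ => by
    rw [energy]
    simp only [hpot0]
    exact lintegral_zero
  constructor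
  · constructor
    · -- E'(A) = {0} → E⁺(A) = {0}
      intro h μ hμ
      refine h μ ⟨hμ.1, fun ε hε => ⟨μ, hμ, ?_⟩⟩
      have hz : (energy κ μ μ).toReal + (energy κ μ μ).toReal
          - 2 * (energy κ μ μ).toReal = 0 := by ring
      rw [sDist, hz, Real.sqrt_zero]
      exact hε
    · -- E⁺(A) = {0} → E'(A) = {0}
      intro h μ hμ
      obtain ⟨hμE, happ⟩ := hμ
      have hE0 : energy κ μ μ = 0 := by
        have hsd : ∀ ε : ℝ, 0 < ε → Real.sqrt (energy κ μ μ).toReal < ε := by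
          intro ε hε
          obtain ⟨ν, hν, hd⟩ := happ ε hε
          rw [h ν hν] at hd
          rw [sDist, h00, hμ0 μ] at hd
          simpa using hd
        by_contra hne
        have hpos : 0 < (energy κ μ μ).toReal := by
          have hnetop : energy κ μ μ ≠ ⊤ := hμE.2.ne
          have hne' : (energy κ μ μ).toReal ≠ 0 := by
            simp [ENNReal.toReal_eq_zero_iff, hne, hnetop]
          exact lt_of_le_of_ne ENNReal.toReal_nonneg (Ne.symm hne')
        exact lt_irrefl _ (hsd _ (Real.sqrt_pos.2 hpos))
      have hrad0 : IsRadon (0 : Measure X) := show (0 : Measure X).Regular from inferInstance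
      have hfe0 : FiniteEnergy κ (0 : Measure X) := by
        have : energy κ (0 : Measure X) (0 : Measure X) < ⊤ := by
          rw [h00]; exact ENNReal.zero_lt_top
        exact this
      obtain ⟨-, heq⟩ := hpd μ 0 hμE.1 hrad0 hμE.2 hfe0
      apply heq
      rw [hE0, h00, hμ0 μ]
      simp
  · constructor
    · -- E⁺(A) = {0} → cp_* A = 0
      intro h
      by_contra hcap
      have hex : ∃ K, ∃ (_ : IsCompact K), ∃ (_ : K ⊆ A), capC κ K ≠ 0 := by
        by_contra hall
        push_neg at hall
        apply hcap
        rw [innerCap]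
        simp only [ENNReal.iSup_eq_zero]
        exact fun K hK hKA => hall K hK hKA
      obtain ⟨K, hK, hKA, hcapK⟩ := hex
      rw [capC, Ne, ENNReal.inv_eq_zero] at hcapK
      have hex2 : ∃ τ : Measure X, ∃ (_ : IsProbabilityMeasure τ), ∃ (_ : τ Kᶜ = 0),
          energy κ τ τ < ⊤ := by
        by_contra hall
        push_neg at hall
        apply hcapK
        refine iInf_eq_top.2 fun τ => iInf_eq_top.2 fun hp => iInf_eq_top.2 fun hc => ?_
        exact top_unique (hall τ hp hc)
      obtain ⟨τ, hτp, hτc, hτE⟩ := hex2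
      haveI := hτp
      obtain ⟨μ', hreg, hEle, hKc, hne⟩ :=
        exists_regular_of_finite_energy hκ.lsc hK τ hτc
      apply hne
      apply h μ'
      refine ⟨⟨hreg, lt_of_le_of_lt hEle hτE⟩, ?_⟩
      exact measure_mono_null (compl_subset_compl.2 hKA) hKc
    · -- cp_* A = 0 → E⁺(A) = {0}
      intro hcap μ hμ
      by_contra hne
      obtain ⟨⟨hrad, hfe⟩, hAc⟩ := hμ
      haveI : μ.Regular := hrad
      have huniv : 0 < μ univ := by
        rw [pos_iff_ne_zero]
        simpa [Measure.measure_univ_eq_zero] using hne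
      obtain ⟨B, hAB, hBm, hB0⟩ := exists_measurable_superset_of_null hAc
      obtain ⟨K₀, -, hK₀c, hK₀pos⟩ :=
        MeasureTheory.Measure.Regular.innerRegular (μ := μ) isOpen_univ 0 huniv
      have hsm : MeasurableSet (K₀ \ B) := hK₀c.isClosed.measurableSet.diff hBm
      have hseq : μ (K₀ \ B) = μ K₀ := measure_diff_null hB0
      have hsfin : μ (K₀ \ B) ≠ ⊤ := by rw [hseq]; exact hK₀c.measure_lt_top.ne
      have hspos : μ (K₀ \ B) ≠ 0 := by rw [hseq]; exact hK₀pos.ne'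
      obtain ⟨K, hKs, hKc, hKlt⟩ := hsm.exists_isCompact_lt_add hsfin hspos
      have hKpos : 0 < μ K := by
        by_contra hc
        push_neg at hc
        rw [le_zero_iff] at hc
        rw [hc, zero_add] at hKlt
        exact lt_irrefl _ hKlt
      have hKA : K ⊆ A := by
        intro x hx
        by_contra hxA
        exact (hKs hx).2 (hAB hxA)
      have hcapK : capC κ K = 0 := by
        have hle : capC κ K ≤ innerCap κ A := by
          rw [innerCap]
          exact le_iSup_of_le K (le_iSup_of_le hKc (le_iSup (fun _ : K ⊆ A => capC κ K) hKA))
        exact le_antisymm (hcap ▸ hle) zero_le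
      rw [capC, ENNReal.inv_eq_zero] at hcapK
      have hKfin : μ K ≠ ⊤ := hKc.measure_lt_top.ne
      set ρ := μ.restrict K with hρ
      set ν := (μ K)⁻¹ • ρ with hν
      have hνuniv : ν univ = 1 := by
        rw [hν, Measure.smul_apply, smul_eq_mul, hρ, Measure.restrict_apply_univ]
        exact ENNReal.inv_mul_cancel hKpos.ne' hKfin
      haveI hνp : IsProbabilityMeasure ν := ⟨hνuniv⟩
      have hνK : ν Kᶜ = 0 := by
        rw [hν, Measure.smul_apply, smul_eq_mul, hρ,
          Measure.restrict_apply hKc.isClosed.measurableSet.compl]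
        simp
      have hitop : (μ K)⁻¹ ≠ ⊤ := ENNReal.inv_ne_top.2 hKpos.ne'
      have hνE : energy κ ν ν < ⊤ := by
        have hpotν : ∀ x, potential κ ν x = (μ K)⁻¹ * potential κ ρ x := fun x => by
          rw [potential, hν, lintegral_smul_measure]
          rfl
        have hEρ : energy κ ρ ρ ≤ energy κ μ μ :=
          lintegral_mono' Measure.restrict_le_self fun x =>
            lintegral_mono' Measure.restrict_le_self le_rfl
        have hcalc : energy κ ν ν = (μ K)⁻¹ * ((μ K)⁻¹ * energy κ ρ ρ) := by
          calc energy κ ν ν = ∫⁻ x, potential κ ν x ∂ν := rfl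
            _ = (μ K)⁻¹ * ∫⁻ x, potential κ ν x ∂ρ := by
                rw [hν, lintegral_smul_measure, smul_eq_mul]
            _ = (μ K)⁻¹ * ∫⁻ x, (μ K)⁻¹ * potential κ ρ x ∂ρ := by
                rw [lintegral_congr fun x => hpotν x]
            _ = (μ K)⁻¹ * ((μ K)⁻¹ * ∫⁻ x, potential κ ρ x ∂ρ) := by
                rw [lintegral_const_mul' _ _ hitop]
        rw [hcalc]
        exact ENNReal.mul_lt_top hitop.lt_top
          (ENNReal.mul_lt_top hitop.lt_top (lt_of_le_of_lt hEρ hfe))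
      have h1 := iInf_eq_top.1 hcapK ν
      have h2 := iInf_eq_top.1 h1 hνp
      have h3 := iInf_eq_top.1 h2 hνK
      exact hνE.ne h3

end Balayage
end
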